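/- arXiv:1608.04457 — 7 statements merged into one kernel-verified Lean document; each statement's English description precedes it below -/
import Mathlib

section
/- Let M and M̃ be real symmetric positive semidefinite p×p matrices with rank(M) = q₁ and rank(M̃) = q, suppose the column space of M is contained in the column space of M̃, and let c > 0. Then: (i) for every 1 ≤ i ≤ q₁, λ_i(M) ≤ λ_i(M + c·M̃) ≤ λ_i(M) + c·λ_1(M̃); (ii) for every q₁ < i ≤ q, c·λ_q(M̃) ≤ λ_i(M + c·M̃) ≤ c·λ_1(M̃); (iii) for every q < i ≤ p, λ_i(M + c·M̃) = 0. -/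
open scoped Classical

/-- The `i`-th largest eigenvalue (1-based, counted with multiplicity) of a real
symmetric `k × k` matrix; junk value `0` if `A` is not symmetric or `i` is out of range. -/
noncomputable def eigDesc {k : ℕ} (A : Matrix (Fin k) (Fin k) ℝ) (i : ℕ) : ℝ :=
  if h : A.IsHermitian ∧ i - 1 < k then
    h.1.eigenvalues (Tuple.sort h.1.eigenvalues (Fin.rev ⟨i - 1, h.2⟩))
  else 0

/-!
Pass to the positive operators `S`, `T` on Euclidean space given by `M`, `M̃`; Mathlib lists the
eigenvalues of a symmetric operator in decreasing order. Courant–Fischer, in the form "if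
`⟪A x, x⟫ ≤ a ‖x‖²` on a subspace of dimension `n - i + 1`, then `λᵢ(A) ≤ a`" and its dual,
follows by meeting that subspace with the span of the top `i` eigenvectors of `A` (resp. the
bottom ones). It yields the Weyl inequalities `λᵢ(S) ≤ λᵢ(S + cT)`, `c λᵢ(T) ≤ λᵢ(S + cT)` and
`λᵢ(S + cT) ≤ λᵢ(S) + c λ₁(T)`, and, tested on the kernel, `λᵢ(A) = 0` for positive `A` once
`i > rank A`. Since `range (S + cT) ≤ range T`, the rank of `S + cT` is at most `q`, which gives
(iii); `λᵢ(S) = 0` for `i > q₁` turns the last Weyl inequality into (ii).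
-/

open Module Submodule LinearMap
open scoped InnerProductSpace

theorem Submodule.inf_ne_bot_of_finrank_lt_add {K V : Type*} [DivisionRing K] [AddCommGroup V]
    [Module K V] [FiniteDimensional K V] {U W : Submodule K V}
    (h : finrank K V < finrank K U + finrank K W) : U ⊓ W ≠ ⊥ := fun hUW =>
  (finrank_add_finrank_le_of_disjoint (disjoint_iff.mpr hUW)).not_gt h

namespace OrthonormalBasis

section RCLike
variable {𝕜 E ι : Type*} [RCLike 𝕜] [NormedAddCommGroup E] [InnerProductSpace 𝕜 E] [Fintype ι]

theorem repr_eq_zero_of_mem_span_image (b : OrthonormalBasis ι 𝕜 E) {s : Set ι} {x : E}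
    (hx : x ∈ span 𝕜 (b '' s)) {i : ι} (hi : i ∉ s) : b.repr x i = 0 := by
  rw [← b.coe_toBasis, b.toBasis.mem_span_image] at hx
  simpa using mt (@hx i) hi

theorem finrank_span_image (b : OrthonormalBasis ι 𝕜 E) (s : Finset ι) :
    finrank 𝕜 (span 𝕜 (b '' s)) = s.card := by
  rw [Set.image_eq_range]
  exact (finrank_span_eq_card
    (b.orthonormal.linearIndependent.comp _ Subtype.coe_injective)).trans (Fintype.card_coe s)

end RCLike

theorem norm_sq_eq_sum_repr_sq {E ι : Type*} [NormedAddCommGroup E] [InnerProductSpace ℝ E]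
    [Fintype ι] (b : OrthonormalBasis ι ℝ E) (x : E) : ‖x‖ ^ 2 = ∑ i, b.repr x i ^ 2 := by
  rw [← b.repr.norm_map, EuclideanSpace.norm_sq_eq]
  simp

end OrthonormalBasis

namespace LinearMap.IsSymmetric
variable {E : Type*} [NormedAddCommGroup E] [InnerProductSpace ℝ E] [FiniteDimensional ℝ E]
  {n : ℕ} {T : E →ₗ[ℝ] E} (hT : T.IsSymmetric) (hn : finrank ℝ E = n)

theorem inner_apply_self_eq_sum (x : E) :
    ⟪T x, x⟫_ℝ = ∑ i, hT.eigenvalues hn i * (hT.eigenvectorBasis hn).repr x i ^ 2 := by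
  rw [← (hT.eigenvectorBasis hn).repr.inner_map_map, PiLp.inner_apply]
  refine Finset.sum_congr rfl fun i _ => ?_
  simp only [eigenvectorBasis_apply_self_apply, Real.ringHom_apply, RCLike.inner_apply]
  ring

theorem finrank_span_eigenvectorBasis_Iic (i : Fin n) :
    finrank ℝ (span ℝ (hT.eigenvectorBasis hn '' Set.Iic i)) = i + 1 := by
  rw [← Finset.coe_Iic, OrthonormalBasis.finrank_span_image, Fin.card_Iic]

theorem finrank_span_eigenvectorBasis_Ici (i : Fin n) :
    finrank ℝ (span ℝ (hT.eigenvectorBasis hn '' Set.Ici i)) = n - i := by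
  rw [← Finset.coe_Ici, OrthonormalBasis.finrank_span_image, Fin.card_Ici]

theorem eigenvalues_mul_norm_sq_le_inner {i : Fin n} {x : E}
    (hx : x ∈ span ℝ (hT.eigenvectorBasis hn '' Set.Iic i)) :
    hT.eigenvalues hn i * ‖x‖ ^ 2 ≤ ⟪T x, x⟫_ℝ := by
  rw [hT.inner_apply_self_eq_sum hn, (hT.eigenvectorBasis hn).norm_sq_eq_sum_repr_sq,
    Finset.mul_sum]
  refine Finset.sum_le_sum fun j _ => ?_
  by_cases hji : j ≤ i
  · exact mul_le_mul_of_nonneg_right (hT.eigenvalues_antitone hn hji) (sq_nonneg _)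
  · simp [OrthonormalBasis.repr_eq_zero_of_mem_span_image _ hx hji]

theorem inner_le_eigenvalues_mul_norm_sq {i : Fin n} {x : E}
    (hx : x ∈ span ℝ (hT.eigenvectorBasis hn '' Set.Ici i)) :
    ⟪T x, x⟫_ℝ ≤ hT.eigenvalues hn i * ‖x‖ ^ 2 := by
  rw [hT.inner_apply_self_eq_sum hn, (hT.eigenvectorBasis hn).norm_sq_eq_sum_repr_sq,
    Finset.mul_sum]
  refine Finset.sum_le_sum fun j _ => ?_
  by_cases hij : i ≤ j
  · exact mul_le_mul_of_nonneg_right (hT.eigenvalues_antitone hn hij) (sq_nonneg _)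
  · simp [OrthonormalBasis.repr_eq_zero_of_mem_span_image _ hx hij]

theorem inner_le_eigenvalues_zero_mul_norm_sq (hn₀ : 0 < n) (x : E) :
    ⟪T x, x⟫_ℝ ≤ hT.eigenvalues hn ⟨0, hn₀⟩ * ‖x‖ ^ 2 := by
  refine hT.inner_le_eigenvalues_mul_norm_sq hn ?_
  have hall : Set.Ici (⟨0, hn₀⟩ : Fin n) = Set.univ :=
    Set.eq_univ_of_forall fun j => Nat.zero_le (j : ℕ)
  rw [hall, Set.image_univ, ← (hT.eigenvectorBasis hn).coe_toBasis, Module.Basis.span_eq]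
  trivial

theorem eigenvalues_le_of_forall_inner_le {i : Fin n} {V : Submodule ℝ E} {a : ℝ}
    (hV : n ≤ finrank ℝ V + i) (h : ∀ x ∈ V, ⟪T x, x⟫_ℝ ≤ a * ‖x‖ ^ 2) :
    hT.eigenvalues hn i ≤ a := by
  have hdim := hT.finrank_span_eigenvectorBasis_Iic hn i
  obtain ⟨x, ⟨hxV, hxW⟩, hx⟩ := exists_mem_ne_zero_of_ne_bot <|
    inf_ne_bot_of_finrank_lt_add (U := V) (W := span ℝ (hT.eigenvectorBasis hn '' Set.Iic i))
      (by omega)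
  exact le_of_mul_le_mul_right
    ((hT.eigenvalues_mul_norm_sq_le_inner hn hxW).trans (h x hxV)) (by positivity)

theorem le_eigenvalues_of_forall_le_inner {i : Fin n} {V : Submodule ℝ E} {a : ℝ}
    (hV : i < finrank ℝ V) (h : ∀ x ∈ V, a * ‖x‖ ^ 2 ≤ ⟪T x, x⟫_ℝ) :
    a ≤ hT.eigenvalues hn i := by
  have hdim := hT.finrank_span_eigenvectorBasis_Ici hn i
  obtain ⟨x, ⟨hxV, hxW⟩, hx⟩ := exists_mem_ne_zero_of_ne_bot <|
    inf_ne_bot_of_finrank_lt_add (U := V) (W := span ℝ (hT.eigenvectorBasis hn '' Set.Ici i))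
      (by omega)
  exact le_of_mul_le_mul_right
    ((h x hxV).trans (hT.inner_le_eigenvalues_mul_norm_sq hn hxW)) (by positivity)

theorem mul_eigenvalues_le_of_forall {S : E →ₗ[ℝ] E} (hS : S.IsSymmetric) {c : ℝ}
    (hc : 0 ≤ c) (h : ∀ x, c * ⟪T x, x⟫_ℝ ≤ ⟪S x, x⟫_ℝ) (i : Fin n) :
    c * hT.eigenvalues hn i ≤ hS.eigenvalues hn i := by
  refine hS.le_eigenvalues_of_forall_le_inner hn
    (V := span ℝ (hT.eigenvectorBasis hn '' Set.Iic i)) ?_ fun x hx => ?_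
  · rw [hT.finrank_span_eigenvectorBasis_Iic hn]
    omega
  · calc c * hT.eigenvalues hn i * ‖x‖ ^ 2 ≤ c * ⟪T x, x⟫_ℝ := by
          rw [mul_assoc]
          exact mul_le_mul_of_nonneg_left (hT.eigenvalues_mul_norm_sq_le_inner hn hx) hc
      _ ≤ ⟪S x, x⟫_ℝ := h x

theorem eigenvalues_le_add_of_forall {S : E →ₗ[ℝ] E} (hS : S.IsSymmetric) {a : ℝ}
    (h : ∀ x, ⟪S x, x⟫_ℝ ≤ ⟪T x, x⟫_ℝ + a * ‖x‖ ^ 2) (i : Fin n) :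
    hS.eigenvalues hn i ≤ hT.eigenvalues hn i + a := by
  refine hS.eigenvalues_le_of_forall_inner_le hn
    (V := span ℝ (hT.eigenvectorBasis hn '' Set.Ici i)) ?_ fun x hx => ?_
  · rw [hT.finrank_span_eigenvectorBasis_Ici hn]
    omega
  · linarith [h x, hT.inner_le_eigenvalues_mul_norm_sq hn hx]

end LinearMap.IsSymmetric

theorem LinearMap.IsPositive.eigenvalues_eq_zero_of_finrank_range_le {E : Type*}
    [NormedAddCommGroup E] [InnerProductSpace ℝ E] [FiniteDimensional ℝ E] {n : ℕ}
    {T : E →ₗ[ℝ] E} (hT : T.IsPositive) (hn : finrank ℝ E = n) {i : Fin n}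
    (hi : finrank ℝ (range T) ≤ i) : hT.isSymmetric.eigenvalues hn i = 0 := by
  refine le_antisymm ?_ (hT.nonneg_eigenvalues hn i)
  refine hT.isSymmetric.eigenvalues_le_of_forall_inner_le hn (V := ker T) ?_ fun x hx => ?_
  · have := T.finrank_range_add_finrank_ker
    omega
  · simp [mem_ker.mp hx]

theorem LinearMap.inner_add_smul_apply_self {E : Type*} [NormedAddCommGroup E]
    [InnerProductSpace ℝ E] (S T : E →ₗ[ℝ] E) (c : ℝ) (x : E) :
    ⟪(S + c • T) x, x⟫_ℝ = ⟪S x, x⟫_ℝ + c * ⟪T x, x⟫_ℝ := by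
  simp [inner_add_left, real_inner_smul_left]

namespace LinearMap
variable {E : Type*} [NormedAddCommGroup E] [InnerProductSpace ℝ E] [FiniteDimensional ℝ E]
  {n : ℕ} (hn : finrank ℝ E = n) {S T : E →ₗ[ℝ] E} {c : ℝ}

theorem IsSymmetric.eigenvalues_le_eigenvalues_add_smul (hS : S.IsSymmetric) (hT : T.IsPositive)
    (hc : 0 ≤ c) (hC : (S + c • T).IsSymmetric) (i : Fin n) :
    hS.eigenvalues hn i ≤ hC.eigenvalues hn i := by
  simpa using hS.mul_eigenvalues_le_of_forall hn hC zero_le_one (fun x => by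
    rw [inner_add_smul_apply_self, one_mul]
    exact le_add_of_nonneg_right (mul_nonneg hc (hT.inner_nonneg_left x))) i

theorem IsSymmetric.mul_eigenvalues_le_eigenvalues_add_smul (hS : S.IsPositive)
    (hT : T.IsSymmetric) (hc : 0 ≤ c) (hC : (S + c • T).IsSymmetric) (i : Fin n) :
    c * hT.eigenvalues hn i ≤ hC.eigenvalues hn i :=
  hT.mul_eigenvalues_le_of_forall hn hC hc (fun x => by
    rw [inner_add_smul_apply_self]
    linarith [hS.inner_nonneg_left x]) i

theorem IsSymmetric.eigenvalues_add_smul_le (hS : S.IsSymmetric) (hT : T.IsSymmetric)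
    (hc : 0 ≤ c) (hC : (S + c • T).IsSymmetric) (hn₀ : 0 < n) (i : Fin n) :
    hC.eigenvalues hn i ≤ hS.eigenvalues hn i + c * hT.eigenvalues hn ⟨0, hn₀⟩ := by
  refine hS.eigenvalues_le_add_of_forall hn hC (fun x => ?_) i
  rw [inner_add_smul_apply_self, mul_assoc]
  gcongr
  exact hT.inner_le_eigenvalues_zero_mul_norm_sq hn hn₀ x

theorem IsPositive.eigenvalues_add_smul_le_of_finrank_range_le (hS : S.IsPositive)
    (hT : T.IsSymmetric) (hc : 0 ≤ c) (hC : (S + c • T).IsSymmetric) (hn₀ : 0 < n) {i : Fin n}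
    (hi : finrank ℝ (range S) ≤ i) :
    hC.eigenvalues hn i ≤ c * hT.eigenvalues hn ⟨0, hn₀⟩ := by
  simpa [hS.eigenvalues_eq_zero_of_finrank_range_le hn hi] using
    hS.isSymmetric.eigenvalues_add_smul_le hn hT hc hC hn₀ i

theorem IsPositive.eigenvalues_add_smul_eq_zero (hS : S.IsPositive) (hT : T.IsPositive)
    (hc : 0 ≤ c) (hST : range S ≤ range T) {i : Fin n} (hi : finrank ℝ (range T) ≤ i) :
    (hS.add (hT.smul_of_nonneg hc)).isSymmetric.eigenvalues hn i = 0 := by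
  refine (hS.add (hT.smul_of_nonneg hc)).eigenvalues_eq_zero_of_finrank_range_le hn ?_
  exact (finrank_mono ((range_add_le _ _).trans (sup_le hST (range_smul_le_range _ _)))).trans hi

end LinearMap

theorem Tuple.apply_sort_rev {α : Type*} [LinearOrder α] {n : ℕ} (f : Fin n → α)
    (σ : Equiv.Perm (Fin n)) (hσ : Antitone (f ∘ σ)) (k : Fin n) :
    f (Tuple.sort f k.rev) = f (σ k) := by
  have h := (Tuple.comp_sort_eq_comp_iff_monotone (f := f) (σ := Fin.revPerm.trans σ)).mpr
    (hσ.comp Fin.rev_anti :)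
  simpa using (congrFun h k.rev).symm

namespace Matrix
variable {𝕜 m n : Type*} [RCLike 𝕜] [Fintype n] [DecidableEq n]

theorem range_toEuclideanLin (A : Matrix m n 𝕜) :
    range (toEuclideanLin A) = (range A.mulVecLin).map
      ((WithLp.linearEquiv 2 𝕜 (m → 𝕜)).symm : (m → 𝕜) →ₗ[𝕜] EuclideanSpace 𝕜 m) := by
  have hA : toEuclideanLin A =
      ((WithLp.linearEquiv 2 𝕜 (m → 𝕜)).symm.toLinearMap ∘ₗ A.mulVecLin) ∘ₗ
        (WithLp.linearEquiv 2 𝕜 (n → 𝕜)).toLinearMap := rfl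
  rw [hA, range_comp_of_range_eq_top _ (LinearEquiv.range _), range_comp]

theorem finrank_range_toEuclideanLin [Fintype m] (A : Matrix m n 𝕜) :
    finrank 𝕜 (range (toEuclideanLin A)) = A.rank := by
  rw [range_toEuclideanLin, LinearEquiv.finrank_map_eq, rank]

theorem range_toEuclideanLin_mono {A B : Matrix m n 𝕜}
    (h : range A.mulVecLin ≤ range B.mulVecLin) :
    range (toEuclideanLin A) ≤ range (toEuclideanLin B) := by
  simpa only [range_toEuclideanLin] using map_mono h

end Matrix

theorem eigDesc_eq_eigenvalues {p : ℕ} {A : Matrix (Fin p) (Fin p) ℝ}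
    {T : EuclideanSpace ℝ (Fin p) →ₗ[ℝ] EuclideanSpace ℝ (Fin p)}
    (hAT : Matrix.toEuclideanLin A = T) (hT : T.IsSymmetric) {i : ℕ} (hi : i - 1 < p) :
    eigDesc A i = hT.eigenvalues finrank_euclideanSpace_fin ⟨i - 1, hi⟩ := by
  subst hAT
  have hA : A.IsHermitian := Matrix.isSymmetric_toEuclideanLin_iff.mp hT
  -- `hA.eigenvalues` is the sorted family `hT.eigenvalues`, reindexed through
  -- `Fin (Fintype.card (Fin p))` by a chosen equivalence `e`.
  set e : Fin (Fintype.card (Fin p)) ≃ Fin p := Fintype.equivOfCardEq (Fintype.card_fin _)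
  have heig : hA.eigenvalues ∘ ((finCongr (Fintype.card_fin p).symm).trans e) =
      hT.eigenvalues finrank_euclideanSpace_fin := by
    have hcast : ∀ (m : ℕ) (hm : finrank ℝ (EuclideanSpace ℝ (Fin p)) = m) (h : m = p)
        (k : Fin p), hT.eigenvalues hm (Fin.cast h.symm k) = hT.eigenvalues (hm.trans h) k := by
      rintro m hm rfl k
      rfl
    funext k
    show hT.eigenvalues _ (e.symm (e _)) = _
    rw [e.symm_apply_apply]
    exact hcast _ _ (Fintype.card_fin p) k
  rw [eigDesc, dif_pos ⟨hA, hi⟩,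
    Tuple.apply_sort_rev hA.eigenvalues _ (heig ▸ hT.eigenvalues_antitone _)]
  exact congrFun heig _

/-- Eigenvalue bounds for `M + c·M̃` where `M, M̃` are real symmetric positive semidefinite
`p × p` matrices with `rank M = q₁`, `rank M̃ = q`, the column space of `M` contained in
that of `M̃`, and `c > 0`:
(i) for `1 ≤ i ≤ q₁`, `λ_i(M) ≤ λ_i(M + c·M̃) ≤ λ_i(M) + c·λ_1(M̃)`;
(ii) for `q₁ < i ≤ q`, `c·λ_q(M̃) ≤ λ_i(M + c·M̃) ≤ c·λ_1(M̃)`;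
(iii) for `q < i ≤ p`, `λ_i(M + c·M̃) = 0`. -/
theorem eigDesc_add_smul_bounds {p q₁ q : ℕ}
    (M Mt : Matrix (Fin p) (Fin p) ℝ)
    (hM : M.PosSemidef) (hMt : Mt.PosSemidef)
    (hrM : M.rank = q₁) (hrMt : Mt.rank = q)
    (hrange : LinearMap.range M.mulVecLin ≤ LinearMap.range Mt.mulVecLin)
    (c : ℝ) (hc : 0 < c) :
    (∀ i, 1 ≤ i → i ≤ q₁ →
      eigDesc M i ≤ eigDesc (M + c • Mt) i ∧
      eigDesc (M + c • Mt) i ≤ eigDesc M i + c * eigDesc Mt 1) ∧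
    (∀ i, q₁ < i → i ≤ q →
      c * eigDesc Mt q ≤ eigDesc (M + c • Mt) i ∧
      eigDesc (M + c • Mt) i ≤ c * eigDesc Mt 1) ∧
    (∀ i, q < i → i ≤ p → eigDesc (M + c • Mt) i = 0) := by
  set S := Matrix.toEuclideanLin M
  set T := Matrix.toEuclideanLin Mt
  have hn : finrank ℝ (EuclideanSpace ℝ (Fin p)) = p := finrank_euclideanSpace_fin
  have hS : S.IsPositive := Matrix.isPositive_toEuclideanLin_iff.mpr hM
  have hT : T.IsPositive := Matrix.isPositive_toEuclideanLin_iff.mpr hMt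
  have hC : (S + c • T).IsPositive := hS.add (hT.smul_of_nonneg hc.le)
  have hCM : Matrix.toEuclideanLin (M + c • Mt) = S + c • T := by simp [S, T]
  have hrS : finrank ℝ (range S) = q₁ := hrM ▸ M.finrank_range_toEuclideanLin
  have hrT : finrank ℝ (range T) = q := hrMt ▸ Mt.finrank_range_toEuclideanLin
  have hqp : q ≤ p := hrT ▸ (range T).finrank_le.trans_eq hn
  have hq₁q : q₁ ≤ q := hrS ▸ hrT ▸ finrank_mono (Matrix.range_toEuclideanLin_mono hrange)
  refine ⟨fun i hi hiq => ?_, fun i hi hiq => ?_, fun i hi hip => ?_⟩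
  · rw [eigDesc_eq_eigenvalues rfl hS.isSymmetric (by omega), eigDesc_eq_eigenvalues rfl
      hT.isSymmetric (by omega), eigDesc_eq_eigenvalues hCM hC.isSymmetric (by omega)]
    exact ⟨hS.isSymmetric.eigenvalues_le_eigenvalues_add_smul hn hT hc.le _ _,
      hS.isSymmetric.eigenvalues_add_smul_le hn hT.isSymmetric hc.le _ (by omega) _⟩
  · rw [eigDesc_eq_eigenvalues rfl hT.isSymmetric (by omega), eigDesc_eq_eigenvalues rfl
      hT.isSymmetric (by omega), eigDesc_eq_eigenvalues hCM hC.isSymmetric (by omega)]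
    refine ⟨le_trans ?_ (hT.isSymmetric.mul_eigenvalues_le_eigenvalues_add_smul hn hS hc.le _ _),
      hS.eigenvalues_add_smul_le_of_finrank_range_le hn hT.isSymmetric hc.le _ _
        (hrS.trans_le (by omega : q₁ ≤ i - 1))⟩
    gcongr
    exact hT.isSymmetric.eigenvalues_antitone hn (Fin.mk_le_mk.mpr (by omega))
  · rw [eigDesc_eq_eigenvalues hCM hC.isSymmetric (by omega)]
    exact hS.eigenvalues_add_smul_eq_zero hn hT hc.le (Matrix.range_toEuclideanLin_mono hrange)
      (hrT.trans_le (by omega : q ≤ i - 1))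
end

section
/- Let p ≥ q + 2 with q ≥ 1, let λ_1 ≥ λ_2 ≥ ... ≥ λ_q > 0 and λ_{q+1} = ... = λ_p = 0, and set s_j = λ_j/(1 + λ_j). For each n ∈ ℕ let λ̂_1(n), ..., λ̂_p(n) ≥ 0 satisfy |λ̂_j(n) − λ_j| ≤ K·n^{−1/2} for all n and all 1 ≤ j ≤ p, for some constant K. Let c₁(n) > 0 with c₁(n) → 0 and n·c₁(n) → ∞, and set ŝ_j(n) = λ̂_j(n)/(1 + λ̂_j(n)) and ŝ*_j(n) = (ŝ_j(n)² + c₁(n))/(ŝ_{j+1}(n)² + c₁(n)) − 1 for 1 ≤ j ≤ p − 1. Then as n → ∞: (i) for each 1 ≤ j ≤ q − 1, ŝ*_j(n) → s_j²/s_{j+1}² − 1; (ii) ŝ*_q(n) → +∞; (iii) for each q + 1 ≤ j ≤ p − 1, ŝ*_j(n) → 0. -/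
/- Nonzero population eigenvalues are estimated consistently, so for `j < q` the ridge ratio
tends to `s_j² / s_{j+1}² − 1` once the ridge vanishes. For `j = q` the numerator tends to
`s_q² > 0` while the denominator `ŝ_{q+1}² + c₁` tends to `0⁺`. For `j > q` both `ŝ_j²` and
`ŝ_{j+1}²` are `O(1/n)`, so `|ŝ*_j| ≤ (K²/n) / c₁ = K² / (n c₁) → 0`. -/

open Filter

/-- `ŝ_j = λ̂_j / (1 + λ̂_j)`. -/
noncomputable def sHat (lam : ℕ → ℝ) (j : ℕ) : ℝ := lam j / (1 + lam j)

/-- First-round ridge ratio `ŝ*_j = (ŝ_j² + c₁)/(ŝ_{j+1}² + c₁) − 1`. -/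
noncomputable def sStar (lam : ℕ → ℝ) (c1 : ℝ) (j : ℕ) : ℝ :=
  ((sHat lam j) ^ 2 + c1) / ((sHat lam (j + 1)) ^ 2 + c1) - 1

open Topology

lemma tendsto_of_abs_sub_le_div_sqrt {u : ℕ → ℝ} {a K : ℝ}
    (h : ∀ n, 1 ≤ n → |u n - a| ≤ K / √n) : Tendsto u atTop (𝓝 a) := by
  have hbound : Tendsto (fun n : ℕ => K / √n) atTop (𝓝 0) :=
    tendsto_const_nhds.div_atTop (Real.tendsto_sqrt_atTop.comp tendsto_natCast_atTop_atTop)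
  refine tendsto_sub_nhds_zero_iff.mp (squeeze_zero_norm' ?_ hbound)
  filter_upwards [eventually_ge_atTop 1] with n hn using h n hn

section sHat

variable {lam : ℕ → ℝ} {j : ℕ}

lemma sHat_nonneg (h : 0 ≤ lam j) : 0 ≤ sHat lam j := by
  unfold sHat; positivity

lemma sHat_pos (h : 0 < lam j) : 0 < sHat lam j := by
  unfold sHat; positivity

lemma sHat_eq_zero (h : lam j = 0) : sHat lam j = 0 := by
  simp [sHat, h]

lemma sHat_le_self (h : 0 ≤ lam j) : sHat lam j ≤ lam j := by
  unfold sHat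
  rw [div_le_iff₀ (by positivity)]
  nlinarith

lemma sHat_sq_le_sq {b : ℝ} (h : 0 ≤ lam j) (hb : lam j ≤ b) : sHat lam j ^ 2 ≤ b ^ 2 :=
  pow_le_pow_left₀ (sHat_nonneg h) ((sHat_le_self h).trans hb) 2

lemma Filter.Tendsto.sHat {α : Type*} {l : Filter α} {L : α → ℕ → ℝ}
    (h : Tendsto (fun x => L x j) l (𝓝 (lam j))) (hne : 1 + lam j ≠ 0) :
    Tendsto (fun x => sHat (L x) j) l (𝓝 (sHat lam j)) :=
  h.div (tendsto_const_nhds.add h) hne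

end sHat

section sStar

variable {α : Type*} {l : Filter α} {L : α → ℕ → ℝ} {c : α → ℝ} {j : ℕ}

lemma sStar_eq_sub_div {lam : ℕ → ℝ} {c : ℝ} (hc : sHat lam (j + 1) ^ 2 + c ≠ 0) :
    sStar lam c j = (sHat lam j ^ 2 - sHat lam (j + 1) ^ 2) / (sHat lam (j + 1) ^ 2 + c) := by
  unfold sStar
  field_simp
  ring

lemma tendsto_sStar_nhds {a b : ℝ} (ha : Tendsto (fun x => sHat (L x) j) l (𝓝 a))
    (hb : Tendsto (fun x => sHat (L x) (j + 1)) l (𝓝 b)) (hb0 : b ≠ 0)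
    (hc : Tendsto c l (𝓝 0)) :
    Tendsto (fun x => sStar (L x) (c x) j) l (𝓝 (a ^ 2 / b ^ 2 - 1)) := by
  have hnum := (ha.pow 2).add hc
  have hden := (hb.pow 2).add hc
  rw [add_zero] at hnum hden
  exact (hnum.div hden (pow_ne_zero 2 hb0)).sub_const 1

lemma tendsto_sStar_atTop {a : ℝ} (ha : Tendsto (fun x => sHat (L x) j) l (𝓝 a)) (ha0 : a ≠ 0)
    (hb : Tendsto (fun x => sHat (L x) (j + 1)) l (𝓝 0))
    (hc : Tendsto c l (𝓝 0)) (hcpos : ∀ x, 0 < c x) :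
    Tendsto (fun x => sStar (L x) (c x) j) l atTop := by
  have hnum := (ha.pow 2).add hc
  have hden := (hb.pow 2).add hc
  rw [add_zero] at hnum
  rw [zero_pow two_ne_zero, add_zero] at hden
  have hden_inv : Tendsto (fun x => (sHat (L x) (j + 1) ^ 2 + c x)⁻¹) l atTop :=
    Tendsto.inv_tendsto_nhdsGT_zero <| tendsto_nhdsWithin_iff.mpr
      ⟨hden, .of_forall fun x => Set.mem_Ioi.mpr (by have := hcpos x; positivity)⟩
  exact tendsto_atTop_add_const_right l (-1)
    (hnum.pos_mul_atTop (sq_pos_of_ne_zero ha0) hden_inv)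

lemma tendsto_sStar_zero {ε : α → ℝ} (hcpos : ∀ x, 0 < c x)
    (ha : ∀ᶠ x in l, sHat (L x) j ^ 2 ≤ ε x) (hb : ∀ᶠ x in l, sHat (L x) (j + 1) ^ 2 ≤ ε x)
    (hε : Tendsto (fun x => ε x / c x) l (𝓝 0)) :
    Tendsto (fun x => sStar (L x) (c x) j) l (𝓝 0) := by
  refine squeeze_zero_norm' ?_ hε
  filter_upwards [ha, hb] with x hax hbx
  have hc := hcpos x
  have hden : 0 < sHat (L x) (j + 1) ^ 2 + c x := by positivity
  have hdiff : |sHat (L x) j ^ 2 - sHat (L x) (j + 1) ^ 2| ≤ ε x :=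
    abs_sub_le_iff.mpr ⟨by linarith [sq_nonneg (sHat (L x) (j + 1))],
      by linarith [sq_nonneg (sHat (L x) j)]⟩
  rw [Real.norm_eq_abs, sStar_eq_sub_div hden.ne', abs_div, abs_of_pos hden]
  exact div_le_div₀ ((abs_nonneg _).trans hdiff) hdiff hc (le_add_of_nonneg_left (sq_nonneg _))

end sStar

/-- Limits of the first-round ridge ratios.  With population eigenvalues
`λ_1 ≥ ... ≥ λ_q > 0 = λ_{q+1} = ... = λ_p`, estimates `λ̂_j(n) ≥ 0` satisfying
`|λ̂_j(n) − λ_j| ≤ K·n^{−1/2}`, and a ridge `c₁(n) → 0` with `n·c₁(n) → ∞`: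
(i) for `1 ≤ j ≤ q − 1`, `ŝ*_j(n) → s_j²/s_{j+1}² − 1`;
(ii) `ŝ*_q(n) → +∞`;
(iii) for `q + 1 ≤ j ≤ p − 1`, `ŝ*_j(n) → 0`. -/
theorem sStar_limits (p q : ℕ) (hq : 1 ≤ q) (hpq : q + 2 ≤ p)
    (lam : ℕ → ℝ)
    (hdec : ∀ i j, 1 ≤ i → i ≤ j → j ≤ q → lam j ≤ lam i)
    (hpos : 0 < lam q)
    (hzero : ∀ j, q < j → j ≤ p → lam j = 0)
    (lamhat : ℕ → ℕ → ℝ)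
    (hnn : ∀ n j, 1 ≤ j → j ≤ p → 0 ≤ lamhat n j)
    (K : ℝ)
    (hrate : ∀ n, 1 ≤ n → ∀ j, 1 ≤ j → j ≤ p → |lamhat n j - lam j| ≤ K / Real.sqrt n)
    (c1 : ℕ → ℝ) (hc1pos : ∀ n, 0 < c1 n)
    (hc1 : Tendsto c1 atTop (nhds 0))
    (hnc1 : Tendsto (fun n : ℕ => (n : ℝ) * c1 n) atTop atTop) :
    (∀ j, 1 ≤ j → j ≤ q - 1 →
      Tendsto (fun n => sStar (lamhat n) (c1 n) j) atTop
        (nhds ((sHat lam j) ^ 2 / (sHat lam (j + 1)) ^ 2 - 1))) ∧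
    Tendsto (fun n => sStar (lamhat n) (c1 n) q) atTop atTop ∧
    (∀ j, q + 1 ≤ j → j ≤ p - 1 →
      Tendsto (fun n => sStar (lamhat n) (c1 n) j) atTop (nhds 0)) := by
  have hlam_pos : ∀ j, 1 ≤ j → j ≤ q → 0 < lam j := fun j h1 h2 =>
    hpos.trans_le (hdec j q h1 h2 le_rfl)
  have hlam_nonneg : ∀ j, 1 ≤ j → j ≤ p → 0 ≤ lam j := fun j h1 h2 => by
    rcases le_or_gt j q with h | h
    · exact (hlam_pos j h1 h).le
    · exact (hzero j h h2).ge
  have hsHat : ∀ j, 1 ≤ j → j ≤ p →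
      Tendsto (fun n => sHat (lamhat n) j) atTop (𝓝 (sHat lam j)) := fun j h1 h2 =>
    (tendsto_of_abs_sub_le_div_sqrt fun n hn => hrate n hn j h1 h2).sHat
      (by linarith [hlam_nonneg j h1 h2])
  have hsHat_small : ∀ j, q < j → j ≤ p → ∀ᶠ n : ℕ in atTop, sHat (lamhat n) j ^ 2 ≤ K ^ 2 / n :=
    fun j h1 h2 => by
      filter_upwards [eventually_ge_atTop 1] with n hn
      have hb := (le_abs_self _).trans (hrate n hn j (by omega) h2)
      rw [hzero j h1 h2, sub_zero] at hb
      rw [← Real.sq_sqrt (Nat.cast_nonneg n), ← div_pow]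
      exact sHat_sq_le_sq (hnn n j (by omega) h2) hb
  refine ⟨fun j h1 h2 => ?_, ?_, fun j h1 h2 => ?_⟩
  · exact tendsto_sStar_nhds (hsHat j h1 (by omega)) (hsHat (j + 1) (by omega) (by omega))
      (sHat_pos (hlam_pos (j + 1) (by omega) (by omega))).ne' hc1
  · refine tendsto_sStar_atTop (hsHat q hq (by omega)) (sHat_pos hpos).ne' ?_ hc1 hc1pos
    simpa only [sHat_eq_zero (hzero (q + 1) (by omega) (by omega))] using
      hsHat (q + 1) (by omega) (by omega)
  · refine tendsto_sStar_zero hc1pos (hsHat_small j (by omega) (by omega))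
      (hsHat_small (j + 1) (by omega) (by omega)) ?_
    exact (tendsto_const_nhds.div_atTop hnc1).congr fun n => (div_div _ _ _).symm
end

section
/- Let p ≥ q + 2 with q ≥ 1, let λ_1 ≥ λ_2 ≥ ... ≥ λ_q > 0 and λ_{q+1} = ... = λ_p = 0. For each n ∈ ℕ let λ̂_1(n), ..., λ̂_p(n) ≥ 0 satisfy |λ̂_j(n) − λ_j| ≤ K·n^{−1/2} for all n and all 1 ≤ j ≤ p, for some constant K. Let c₁(n), c₂(n) > 0 with c₁(n) → 0, c₂(n) → 0 and n·c₁(n)·c₂(n) → ∞, and fix τ ∈ (0, 1). Set ŝ_j(n) = λ̂_j(n)/(1 + λ̂_j(n)), ŝ*_j(n) = (ŝ_j(n)² + c₁(n))/(ŝ_{j+1}(n)² + c₁(n)) − 1, and r_j(n) = (ŝ*_{j+1}(n) + c₂(n))/(ŝ*_j(n) + c₂(n)). Then there exists N such that for all n ≥ N: r_q(n) ≤ τ and r_j(n) > τ for every j with q < j ≤ p − 2; consequently, for all n ≥ N the set {j ∈ {1, ..., p − 2} : r_j(n) ≤ τ} is nonempty and its maximum equals q. -/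
open Filter

/-- Second-round ridge ratio `r_j = (ŝ*_{j+1} + c₂)/(ŝ*_j + c₂)`. -/
noncomputable def rRatio (lam : ℕ → ℝ) (c1 c2 : ℝ) (j : ℕ) : ℝ :=
  (sStar lam c1 (j + 1) + c2) / (sStar lam c1 j + c2)

set_option maxHeartbeats 1000000 in
/-- The thresholding double ridge ratio criterion identifies `q`: eventually `r_q(n) ≤ τ`
and `r_j(n) > τ` for all `q < j ≤ p − 2`; consequently the set
`{j ∈ {1, ..., p − 2} : r_j(n) ≤ τ}` is nonempty with maximum equal to `q`. -/
theorem tdrr_identifies_q (p q : ℕ) (hq : 1 ≤ q) (hpq : q + 2 ≤ p)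
    (lam : ℕ → ℝ)
    (hdec : ∀ i j, 1 ≤ i → i ≤ j → j ≤ q → lam j ≤ lam i)
    (hpos : 0 < lam q)
    (hzero : ∀ j, q < j → j ≤ p → lam j = 0)
    (lamhat : ℕ → ℕ → ℝ)
    (hnn : ∀ n j, 1 ≤ j → j ≤ p → 0 ≤ lamhat n j)
    (K : ℝ)
    (hrate : ∀ n, 1 ≤ n → ∀ j, 1 ≤ j → j ≤ p → |lamhat n j - lam j| ≤ K / Real.sqrt n)
    (c1 c2 : ℕ → ℝ) (hc1pos : ∀ n, 0 < c1 n) (hc2pos : ∀ n, 0 < c2 n)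
    (hc1 : Tendsto c1 atTop (nhds 0)) (hc2 : Tendsto c2 atTop (nhds 0))
    (hncc : Tendsto (fun n : ℕ => (n : ℝ) * c1 n * c2 n) atTop atTop)
    (τ : ℝ) (hτ0 : 0 < τ) (hτ1 : τ < 1) :
    ∃ N, ∀ n, N ≤ n →
      rRatio (lamhat n) (c1 n) (c2 n) q ≤ τ ∧
      (∀ j, q < j → j ≤ p - 2 → τ < rRatio (lamhat n) (c1 n) (c2 n) j) ∧
      {j | 1 ≤ j ∧ j ≤ p - 2 ∧ rRatio (lamhat n) (c1 n) (c2 n) j ≤ τ}.Nonempty ∧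
      sSup {j | 1 ≤ j ∧ j ≤ p - 2 ∧ rRatio (lamhat n) (c1 n) (c2 n) j ≤ τ} = q := by
  have hp1 : (1:ℕ) ≤ p := by omega
  have hqp : q ≤ p := by omega
  have hq1p : q + 1 ≤ p := by omega
  have hK : 0 ≤ K := by
    have h := hrate 1 le_rfl 1 le_rfl hp1
    rw [Nat.cast_one, Real.sqrt_one, div_one] at h
    exact le_trans (abs_nonneg _) h
  set a : ℝ := (lam q / 2) / (1 + lam q / 2) with ha
  have hlq : 0 < lam q := hpos
  have ha0 : 0 < a := div_pos (by linarith) (by linarith)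
  have hM0 : Tendsto (fun n : ℕ => K ^ 2 / (n : ℝ)) atTop (nhds 0) :=
    tendsto_const_div_atTop_nhds_zero_nat _
  have E1 : ∀ᶠ n : ℕ in atTop, 1 ≤ n := eventually_ge_atTop 1
  have E2 : ∀ᶠ n : ℕ in atTop, K ^ 2 / (n : ℝ) < (lam q / 2) ^ 2 :=
    hM0.eventually_lt_const (by positivity)
  have E3 : ∀ᶠ n : ℕ in atTop, K ^ 2 / (n : ℝ) + c1 n < a ^ 2 * τ / 4 := by
    have hadd : Tendsto (fun n : ℕ => K ^ 2 / (n : ℝ) + c1 n) atTop (nhds 0) := by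
      simpa using hM0.add hc1
    exact hadd.eventually_lt_const (by positivity)
  have E4 : ∀ᶠ n : ℕ in atTop, c2 n < 1 := hc2.eventually_lt_const one_pos
  have E5a : ∀ᶠ n : ℕ in atTop, K ^ 2 * (1 + τ) + 1 ≤ (1 - τ) * ((n : ℝ) * c1 n * c2 n) := by
    have h := hncc.const_mul_atTop (show (0:ℝ) < 1 - τ by linarith)
    exact h.eventually_ge_atTop _
  have E5b : ∀ᶠ n : ℕ in atTop, 2 * K ^ 2 ≤ (n : ℝ) * c1 n * c2 n :=
    hncc.eventually_ge_atTop _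
  have main : ∀ᶠ n : ℕ in atTop,
      rRatio (lamhat n) (c1 n) (c2 n) q ≤ τ ∧
      (∀ j, q < j → j ≤ p - 2 → τ < rRatio (lamhat n) (c1 n) (c2 n) j) ∧
      {j | 1 ≤ j ∧ j ≤ p - 2 ∧ rRatio (lamhat n) (c1 n) (c2 n) j ≤ τ}.Nonempty ∧
      sSup {j | 1 ≤ j ∧ j ≤ p - 2 ∧ rRatio (lamhat n) (c1 n) (c2 n) j ≤ τ} = q := by
    filter_upwards [E1, E2, E3, E4, E5a, E5b] with n hn1 h2 h3 h4 h5a h5b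
    have hn0 : (0:ℝ) < n := by exact_mod_cast hn1
    have hc1n := hc1pos n
    have hc2n := hc2pos n
    have hP : (0:ℝ) < (n : ℝ) * c1 n := mul_pos hn0 hc1n
    have hsn : (0:ℝ) < Real.sqrt n := Real.sqrt_pos.mpr hn0
    have hsq : (K / Real.sqrt n) ^ 2 = K ^ 2 / n := by
      rw [div_pow, Real.sq_sqrt hn0.le]
    have hKs : K / Real.sqrt n ≤ lam q / 2 := by
      have hx : 0 ≤ K / Real.sqrt n := div_nonneg hK hsn.le
      nlinarith [hsq, h2, hlq]
    -- small indices
    have hsmall : ∀ j, q < j → j ≤ p →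
        0 ≤ sHat (lamhat n) j ∧ sHat (lamhat n) j ^ 2 ≤ K ^ 2 / n := by
      intro j hjq hjp
      have hj1 : 1 ≤ j := by omega
      have h0 : 0 ≤ lamhat n j := hnn n j hj1 hjp
      have hz : lam j = 0 := hzero j hjq hjp
      have hr := hrate n hn1 j hj1 hjp
      rw [hz, sub_zero] at hr
      have hub : lamhat n j ≤ K / Real.sqrt n := le_of_abs_le hr
      have hs0 : 0 ≤ sHat (lamhat n) j := div_nonneg h0 (by linarith)
      have hsle : sHat (lamhat n) j ≤ lamhat n j := div_le_self h0 (by linarith)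
      refine ⟨hs0, ?_⟩
      calc sHat (lamhat n) j ^ 2 ≤ (K / Real.sqrt n) ^ 2 :=
            pow_le_pow_left₀ hs0 (hsle.trans hub) 2
        _ = K ^ 2 / n := hsq
    have hbig : a ≤ sHat (lamhat n) q := by
      have h0 : 0 ≤ lamhat n q := hnn n q hq hqp
      have hr := hrate n hn1 q hq hqp
      have hlb : lam q - K / Real.sqrt n ≤ lamhat n q := by
        have h := (abs_le.mp hr).1; linarith
      have hlb2 : lam q / 2 ≤ lamhat n q := by linarith
      rw [ha, sHat, div_le_div_iff₀ (by linarith) (by linarith)]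
      nlinarith
    have hposden : ∀ j : ℕ, (0:ℝ) < sHat (lamhat n) (j + 1) ^ 2 + c1 n := fun j => by positivity
    have hrw : ∀ j : ℕ, sStar (lamhat n) (c1 n) j =
        (sHat (lamhat n) j ^ 2 - sHat (lamhat n) (j + 1) ^ 2) /
          (sHat (lamhat n) (j + 1) ^ 2 + c1 n) := by
      intro j
      rw [sStar, div_sub_one (hposden j).ne']
      congr 1; ring
    set δ : ℝ := (K ^ 2 / n) / c1 n with hδ
    have hδeq : δ = K ^ 2 / ((n : ℝ) * c1 n) := by rw [hδ, div_div]
    have hδ0 : 0 ≤ δ := by positivity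
    have hδhalf : δ ≤ c2 n / 2 := by
      rw [hδeq, div_le_div_iff₀ hP two_pos]
      linarith [h5b]
    have hδτ : δ * (1 + τ) < c2 n * (1 - τ) := by
      rw [hδeq, div_mul_eq_mul_div, div_lt_iff₀ hP]
      linarith [h5a]
    have hS1 : ∀ j, q < j → j + 1 ≤ p → |sStar (lamhat n) (c1 n) j| ≤ δ := by
      intro j hjq hjp
      obtain ⟨hA0, hA⟩ := hsmall j hjq (by omega)
      obtain ⟨hB0, hB⟩ := hsmall (j + 1) (by omega) hjp
      rw [hrw j, hδ, abs_div, abs_of_pos (hposden j)]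
      refine div_le_div₀ (by positivity) ?_ hc1n ?_
      · rw [abs_le]
        constructor <;>
          nlinarith [sq_nonneg (sHat (lamhat n) j), sq_nonneg (sHat (lamhat n) (j + 1))]
      · nlinarith [sq_nonneg (sHat (lamhat n) (j + 1))]
    have hSq : 2 / τ ≤ sStar (lamhat n) (c1 n) q := by
      obtain ⟨hB0, hB⟩ := hsmall (q + 1) (by omega) hq1p
      have hX : a ^ 2 ≤ sHat (lamhat n) q ^ 2 := pow_le_pow_left₀ ha0.le hbig 2
      rw [hrw q, le_div_iff₀ (hposden q), div_mul_eq_mul_div, div_le_iff₀ hτ0]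
      nlinarith [mul_nonneg hτ0.le (sub_nonneg.mpr hX),
        mul_nonneg hτ0.le (sub_nonneg.mpr hB),
        sq_nonneg (sHat (lamhat n) (q + 1)), mul_pos ha0 ha0,
        mul_nonneg hτ0.le (le_of_lt (sub_pos.mpr h3))]
    have hτ2 : (2:ℝ) ≤ sStar (lamhat n) (c1 n) q * τ := (div_le_iff₀ hτ0).mp hSq
    have hSq1 : |sStar (lamhat n) (c1 n) (q + 1)| ≤ δ := hS1 (q + 1) (by omega) (by omega)
    have hSqpos : 0 < sStar (lamhat n) (c1 n) q + c2 n := by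
      have h2τ : 0 < 2 / τ := by positivity
      linarith [hSq, hc2n]
    have G1 : rRatio (lamhat n) (c1 n) (c2 n) q ≤ τ := by
      rw [rRatio, div_le_iff₀ hSqpos]
      have h1 : sStar (lamhat n) (c1 n) (q + 1) ≤ δ := le_of_abs_le hSq1
      have h2' : 0 ≤ τ * c2 n := mul_nonneg hτ0.le hc2n.le
      nlinarith [hτ2, h1, hδhalf, h4, h2']
    have G2 : ∀ j, q < j → j ≤ p - 2 → τ < rRatio (lamhat n) (c1 n) (c2 n) j := by
      intro j hjq hjp2
      have hjp : j + 2 ≤ p := by omega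
      have hb1 := abs_le.mp (hS1 j hjq (by omega))
      have hb2 := abs_le.mp (hS1 (j + 1) (by omega) (by omega))
      have hdpos : 0 < sStar (lamhat n) (c1 n) j + c2 n := by
        linarith [hb1.1, hδhalf, hc2n]
      rw [rRatio, lt_div_iff₀ hdpos]
      have hmul : τ * (sStar (lamhat n) (c1 n) j + c2 n) ≤ τ * (δ + c2 n) :=
        mul_le_mul_of_nonneg_left (by linarith [hb1.2]) hτ0.le
      nlinarith [hmul, hδτ, hb2.1]
    have hqmem : q ∈ {j | 1 ≤ j ∧ j ≤ p - 2 ∧ rRatio (lamhat n) (c1 n) (c2 n) j ≤ τ} :=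
      ⟨hq, by omega, G1⟩
    have hbdd : BddAbove {j | 1 ≤ j ∧ j ≤ p - 2 ∧ rRatio (lamhat n) (c1 n) (c2 n) j ≤ τ} :=
      ⟨p - 2, fun j hj => hj.2.1⟩
    have hub : ∀ j ∈ {j | 1 ≤ j ∧ j ≤ p - 2 ∧ rRatio (lamhat n) (c1 n) (c2 n) j ≤ τ}, j ≤ q := by
      intro j hj
      by_contra h
      push_neg at h
      exact absurd hj.2.2 (not_le.mpr (G2 j h hj.2.1))
    exact ⟨G1, G2, ⟨q, hqmem⟩,
      le_antisymm (csSup_le ⟨q, hqmem⟩ hub) (le_csSup hbdd hqmem)⟩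
  exact eventually_atTop.mp main
end

section
/- Let (Ω, F, P) be a probability space, let p ≥ q + 2 with q ≥ 1, and let M be a real symmetric positive semidefinite p×p matrix with exactly q nonzero eigenvalues. For each n let M_n : Ω → (real symmetric p×p matrices) be measurable, and assume ‖M_n − M‖_F = O_p(n^{−1/2}), i.e. for every ε > 0 there exists C > 0 such that P(‖M_n − M‖_F > C·n^{−1/2}) ≤ ε for all n. Let λ̂_j(n) = λ_j(M_n) be the j-th largest eigenvalue of M_n, let c₁(n), c₂(n) > 0 with c₁(n) → 0, c₂(n) → 0 and n·c₁(n)·c₂(n) → ∞, and fix τ ∈ (0, 1). Define ŝ_j(n) = λ̂_j(n)/(1 + λ̂_j(n)), ŝ*_j(n) = (ŝ_j(n)² + c₁(n))/(ŝ_{j+1}(n)² + c₁(n)) − 1, r_j(n) = (ŝ*_{j+1}(n) + c₂(n))/(ŝ*_j(n) + c₂(n)), and S_n = {j ∈ {1, ..., p − 2} : r_j(n) ≤ τ}. Then P(S_n is nonempty and max S_n = q) → 1 as n → ∞. -/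
open Filter MeasureTheory
open scoped Classical ENNReal

/-- The Frobenius norm of a real matrix. -/
noncomputable def frobNorm {m n : ℕ} (C : Matrix (Fin m) (Fin n) ℝ) : ℝ :=
  Real.sqrt (∑ i, ∑ j, (C i j) ^ 2)

/-!
By Weyl's inequality every sample eigenvalue `λ̂_j` lies within `δ = ‖Mₙ - M‖_F = O_p(n^{-1/2})`
of `λ_j(M)`. Hence `ŝ_j² ≤ 4δ²` for `j > q` while `ŝ_q` stays bounded away from `0`, so
`|ŝ*_j| ≤ 4δ²/c₁` for `j > q` and `ŝ*_q ≥ 1`. Since `δ²/(c₁c₂) = O_p(1/(n c₁ c₂)) → 0`, the noise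
`4δ²/c₁` is `o(c₂)`: then `r_q ≤ 4δ²/c₁ + c₂ → 0`, while `r_j → 1` for `q < j ≤ p - 2`.
-/

open Matrix Topology

theorem tendsto_measure_nhds_one_of_compl_subset {Ω ι : Type*} [MeasurableSpace Ω] {P : Measure Ω}
    [IsProbabilityMeasure P] {l : Filter ι} {G : ι → Set Ω}
    (h : ∀ ε : ℝ≥0∞, 0 < ε → ∃ E : ι → Set Ω, ∀ᶠ i in l, P (E i) ≤ ε ∧ (E i)ᶜ ⊆ G i) :
    Tendsto (fun i => P (G i)) l (𝓝 1) := by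
  rw [ENNReal.tendsto_nhds ENNReal.one_ne_top]
  intro ε hε
  obtain ⟨E, hE⟩ := h ε hε
  filter_upwards [hE] with i ⟨hEi, hsub⟩
  refine ⟨tsub_le_iff_left.mpr ?_, prob_le_one.trans le_self_add⟩
  calc 1 = P Set.univ := measure_univ.symm
    _ ≤ P (E i ∪ G i) := measure_mono (Set.compl_subset_iff_union.mp hsub).ge
    _ ≤ P (E i) + P (G i) := measure_union_le _ _
    _ ≤ ε + P (G i) := by gcongr

lemma frobNorm_nonneg {m n : ℕ} (C : Matrix (Fin m) (Fin n) ℝ) : 0 ≤ frobNorm C :=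
  Real.sqrt_nonneg _

lemma frobNorm_sub_comm {m n : ℕ} (A B : Matrix (Fin m) (Fin n) ℝ) :
    frobNorm (A - B) = frobNorm (B - A) := by
  rw [← neg_sub]
  simp only [frobNorm, Matrix.neg_apply, neg_sq]

lemma dotProduct_mulVec_le_frobNorm_mul {n : ℕ} (C : Matrix (Fin n) (Fin n) ℝ) (v : Fin n → ℝ) :
    v ⬝ᵥ (C *ᵥ v) ≤ frobNorm C * (v ⬝ᵥ v) := by
  have hvv : v ⬝ᵥ v = ∑ i, v i ^ 2 := Finset.sum_congr rfl fun i _ => (sq (v i)).symm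
  have hrow : ∀ i, (C *ᵥ v) i ^ 2 ≤ (∑ j, C i j ^ 2) * (v ⬝ᵥ v) := fun i => by
    rw [hvv]; exact Finset.sum_mul_sq_le_sq_mul_sq Finset.univ (C i) v
  have hsq : (v ⬝ᵥ (C *ᵥ v)) ^ 2 ≤ (frobNorm C * (v ⬝ᵥ v)) ^ 2 := by
    rw [mul_pow, frobNorm, Real.sq_sqrt (by positivity)]
    calc (v ⬝ᵥ (C *ᵥ v)) ^ 2 ≤ (v ⬝ᵥ v) * ∑ i, (C *ᵥ v) i ^ 2 := by
          rw [hvv]; exact Finset.sum_mul_sq_le_sq_mul_sq Finset.univ v (C *ᵥ v)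
      _ ≤ (v ⬝ᵥ v) * ∑ i, (∑ j, C i j ^ 2) * (v ⬝ᵥ v) := by
          gcongr with i
          · rw [hvv]; positivity
          · exact hrow i
      _ = (∑ i, ∑ j, C i j ^ 2) * (v ⬝ᵥ v) ^ 2 := by rw [← Finset.sum_mul]; ring
  exact (abs_le_of_sq_le_sq' hsq (mul_nonneg (Real.sqrt_nonneg _) (by rw [hvv]; positivity))).2

namespace Matrix.IsHermitian

variable {p : ℕ} {A B : Matrix (Fin p) (Fin p) ℝ}

noncomputable def eigenCoeffs (hA : A.IsHermitian) (v : Fin p → ℝ) : Fin p → ℝ :=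
  star (hA.eigenvectorUnitary : Matrix (Fin p) (Fin p) ℝ) *ᵥ v

/-- The `k`-th smallest eigenvalue, `k` counted from `0`. -/
noncomputable def sortedEigenvalues (hA : A.IsHermitian) (k : Fin p) : ℝ :=
  hA.eigenvalues (Tuple.sort hA.eigenvalues k)

lemma dotProduct_mulVec_eq_sum_eigenvalues (hA : A.IsHermitian) (v : Fin p → ℝ) :
    v ⬝ᵥ (A *ᵥ v) = ∑ j, hA.eigenvalues j * hA.eigenCoeffs v j ^ 2 := by
  have hc : v ᵥ* (hA.eigenvectorUnitary : Matrix (Fin p) (Fin p) ℝ) = hA.eigenCoeffs v := by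
    rw [eigenCoeffs, star_eq_conjTranspose, conjTranspose_eq_transpose_of_trivial,
      mulVec_transpose]
  conv_lhs => rw [hA.spectral_theorem]
  rw [Unitary.conjStarAlgAut_apply, ← mulVec_mulVec, dotProduct_mulVec, ← vecMul_vecMul, hc]
  simp only [dotProduct, RCLike.ofReal_real_eq_id, CompTriple.comp_eq, vecMul_diagonal]
  exact Finset.sum_congr rfl fun j _ => by rw [eigenCoeffs]; ring

lemma sum_eigenCoeffs_sq (hA : A.IsHermitian) (v : Fin p → ℝ) :
    ∑ j, hA.eigenCoeffs v j ^ 2 = v ⬝ᵥ v := by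
  set U := (hA.eigenvectorUnitary : Matrix (Fin p) (Fin p) ℝ)
  have h1 : ∑ j, hA.eigenCoeffs v j ^ 2 = hA.eigenCoeffs v ⬝ᵥ (star U *ᵥ v) := by
    simp [dotProduct, eigenCoeffs, sq, U]
  have h2 : hA.eigenCoeffs v ᵥ* star U = U *ᵥ hA.eigenCoeffs v := by
    rw [star_eq_conjTranspose, conjTranspose_eq_transpose_of_trivial, vecMul_transpose]
  rw [h1, dotProduct_mulVec, h2, eigenCoeffs, mulVec_mulVec,
    (mem_unitaryGroup_iff).mp hA.eigenvectorUnitary.2, one_mulVec]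

lemma sortedEigenvalues_mul_le (hA : A.IsHermitian) {k : Fin p} {v : Fin p → ℝ}
    (hv : ∀ j < k, hA.eigenCoeffs v (Tuple.sort hA.eigenvalues j) = 0) :
    hA.sortedEigenvalues k * (v ⬝ᵥ v) ≤ v ⬝ᵥ (A *ᵥ v) := by
  set σ := Tuple.sort hA.eigenvalues
  rw [← hA.sum_eigenCoeffs_sq v, hA.dotProduct_mulVec_eq_sum_eigenvalues v,
    ← Equiv.sum_comp σ (fun j => hA.eigenCoeffs v j ^ 2),
    ← Equiv.sum_comp σ (fun j => hA.eigenvalues j * hA.eigenCoeffs v j ^ 2), Finset.mul_sum]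
  refine Finset.sum_le_sum fun j _ => ?_
  rcases lt_or_ge j k with h | h
  · simp [hv j h]
  · exact mul_le_mul_of_nonneg_right (Tuple.monotone_sort hA.eigenvalues h) (sq_nonneg _)

lemma le_sortedEigenvalues_mul (hA : A.IsHermitian) {k : Fin p} {v : Fin p → ℝ}
    (hv : ∀ j, k < j → hA.eigenCoeffs v (Tuple.sort hA.eigenvalues j) = 0) :
    v ⬝ᵥ (A *ᵥ v) ≤ hA.sortedEigenvalues k * (v ⬝ᵥ v) := by
  set σ := Tuple.sort hA.eigenvalues
  rw [← hA.sum_eigenCoeffs_sq v, hA.dotProduct_mulVec_eq_sum_eigenvalues v,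
    ← Equiv.sum_comp σ (fun j => hA.eigenCoeffs v j ^ 2),
    ← Equiv.sum_comp σ (fun j => hA.eigenvalues j * hA.eigenCoeffs v j ^ 2), Finset.mul_sum]
  refine Finset.sum_le_sum fun j _ => ?_
  rcases le_or_gt j k with h | h
  · exact mul_le_mul_of_nonneg_right (Tuple.monotone_sort hA.eigenvalues h) (sq_nonneg _)
  · simp [hv j h]

lemma exists_ne_zero_eigenCoeffs_eq_zero (hA : A.IsHermitian) (hB : B.IsHermitian) (k : Fin p) :
    ∃ v ≠ 0, (∀ j < k, hB.eigenCoeffs v (Tuple.sort hB.eigenvalues j) = 0) ∧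
      ∀ j, k < j → hA.eigenCoeffs v (Tuple.sort hA.eigenvalues j) = 0 := by
  let UA := star (hA.eigenvectorUnitary : Matrix (Fin p) (Fin p) ℝ)
  let UB := star (hB.eigenvectorUnitary : Matrix (Fin p) (Fin p) ℝ)
  let R : Matrix {j : Fin p | j ≠ k} (Fin p) ℝ := fun j =>
    if j.1 < k then UB (Tuple.sort hB.eigenvalues j) else UA (Tuple.sort hA.eigenvalues j)
  have hdim : Module.finrank ℝ ({j : Fin p | j ≠ k} → ℝ) < Module.finrank ℝ (Fin p → ℝ) := by
    rw [Module.finrank_fin_fun, Module.finrank_fintype_fun_eq_card, Set.card_ne_eq,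
      Fintype.card_fin]
    have := k.pos
    omega
  obtain ⟨v, hv, hv0⟩ :=
    (Submodule.ne_bot_iff _).mp (LinearMap.ker_ne_bot_of_finrank_lt (f := R.mulVecLin) hdim)
  have hRv : ∀ j : {j : Fin p | j ≠ k}, R j ⬝ᵥ v = 0 := fun j => congrFun hv j
  refine ⟨v, hv0, fun j hj => ?_, fun j hj => ?_⟩
  · have h := hRv ⟨j, hj.ne⟩
    simp only [R, if_pos hj] at h
    exact h
  · have h := hRv ⟨j, hj.ne'⟩
    simp only [R, if_neg hj.not_gt] at h
    exact h

/-- Weyl's inequality, via Courant–Fischer: a nonzero `v` orthogonal to the eigenvectors of `B`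
below `k` and to those of `A` above `k` has `λ_k(B) |v|² ≤ vᵀBv` and `vᵀAv ≤ λ_k(A) |v|²`. -/
theorem sortedEigenvalues_le_add_frobNorm (hA : A.IsHermitian) (hB : B.IsHermitian) (k : Fin p) :
    hB.sortedEigenvalues k ≤ hA.sortedEigenvalues k + frobNorm (B - A) := by
  obtain ⟨v, hv0, hvB, hvA⟩ := exists_ne_zero_eigenCoeffs_eq_zero hA hB k
  have hvv : 0 < v ⬝ᵥ v :=
    lt_of_le_of_ne (Finset.sum_nonneg fun i _ => mul_self_nonneg (v i))
      (Ne.symm (dotProduct_self_eq_zero.not.mpr hv0))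
  have hB_le := hB.sortedEigenvalues_mul_le hvB
  have hA_le := hA.le_sortedEigenvalues_mul hvA
  have hdiff := dotProduct_mulVec_le_frobNorm_mul (B - A) v
  rw [sub_mulVec, dotProduct_sub] at hdiff
  refine le_of_mul_le_mul_right ?_ hvv
  linarith

end Matrix.IsHermitian

lemma eigDesc_eq_sortedEigenvalues {p : ℕ} {A : Matrix (Fin p) (Fin p) ℝ} (hA : A.IsHermitian)
    {i : ℕ} (hi : i - 1 < p) : eigDesc A i = hA.sortedEigenvalues (Fin.rev ⟨i - 1, hi⟩) :=
  dif_pos ⟨hA, hi⟩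

lemma abs_eigDesc_sub_le_frobNorm {p : ℕ} {A B : Matrix (Fin p) (Fin p) ℝ} (hA : A.IsHermitian)
    (hB : B.IsHermitian) (i : ℕ) : |eigDesc B i - eigDesc A i| ≤ frobNorm (B - A) := by
  by_cases hi : i - 1 < p
  · rw [eigDesc_eq_sortedEigenvalues hA hi, eigDesc_eq_sortedEigenvalues hB hi, abs_sub_le_iff]
    have := hA.sortedEigenvalues_le_add_frobNorm hB (Fin.rev ⟨i - 1, hi⟩)
    have := hB.sortedEigenvalues_le_add_frobNorm hA (Fin.rev ⟨i - 1, hi⟩)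
    rw [frobNorm_sub_comm] at this
    constructor <;> linarith
  · simp [eigDesc, hi, frobNorm_nonneg]

def tdrrSet (p : ℕ) (lam : ℕ → ℝ) (c1 c2 τ : ℝ) : Set ℕ :=
  {j | 1 ≤ j ∧ j ≤ p - 2 ∧ rRatio lam c1 c2 j ≤ τ}

section RidgeRatios

variable {lam : ℕ → ℝ} {c1 c2 τ : ℝ}

lemma sHat_sq_le {i : ℕ} {δ : ℝ} (hi : |lam i| ≤ δ) (hδ : δ ≤ 1 / 2) :
    sHat lam i ^ 2 ≤ 4 * δ ^ 2 := by
  have hden : 1 / 2 ≤ 1 + lam i := by linarith [neg_abs_le (lam i)]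
  have habs : |sHat lam i| ≤ 2 * δ := by
    rw [sHat, abs_div, abs_of_pos (show 0 < 1 + lam i by linarith), div_le_iff₀ (by linarith)]
    nlinarith [abs_nonneg (lam i)]
  calc sHat lam i ^ 2 ≤ (2 * δ) ^ 2 := sq_le_sq' (abs_le.mp habs).1 (abs_le.mp habs).2
    _ = 4 * δ ^ 2 := by ring

lemma div_one_add_le_sHat {i : ℕ} {L : ℝ} (hL : 0 ≤ L) (hi : L ≤ lam i) :
    L / (1 + L) ≤ sHat lam i := by
  rw [sHat, div_le_div_iff₀ (by linarith) (by linarith)]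
  linarith

lemma abs_sStar_le {j : ℕ} {η : ℝ} (hc1 : 0 < c1) (hj : sHat lam j ^ 2 ≤ η)
    (hj1 : sHat lam (j + 1) ^ 2 ≤ η) : |sStar lam c1 j| ≤ η / c1 := by
  have hj0 := sq_nonneg (sHat lam j)
  have hj10 := sq_nonneg (sHat lam (j + 1))
  have hden : 0 < sHat lam (j + 1) ^ 2 + c1 := by positivity
  rw [sStar, div_sub_one hden.ne', add_sub_add_right_eq_sub, abs_div, abs_of_pos hden]
  exact div_le_div₀ (hj0.trans hj) (abs_sub_le_iff.mpr ⟨by linarith, by linarith⟩) hc1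
    (by linarith)

lemma one_le_sStar {j : ℕ} (hc1 : 0 < c1)
    (h : 2 * sHat lam (j + 1) ^ 2 + c1 ≤ sHat lam j ^ 2) : 1 ≤ sStar lam c1 j := by
  have hden : 0 < sHat lam (j + 1) ^ 2 + c1 := by positivity
  rw [sStar, le_sub_iff_add_le, le_div_iff₀ hden]
  linarith

lemma rRatio_le {j : ℕ} (hτ : 0 ≤ τ) (hc2 : 0 ≤ c2) (hj : 1 ≤ sStar lam c1 j)
    (hj1 : sStar lam c1 (j + 1) + c2 ≤ τ) : rRatio lam c1 c2 j ≤ τ := by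
  rw [rRatio, div_le_iff₀ (by linarith)]
  nlinarith

lemma lt_rRatio {j : ℕ} {e : ℝ} (hτ : 0 ≤ τ) (hc2 : 0 < c2) (hj : |sStar lam c1 j| ≤ e)
    (hj1 : |sStar lam c1 (j + 1)| ≤ e) (he : (1 + τ) * e < (1 - τ) * c2) :
    τ < rRatio lam c1 c2 j := by
  obtain ⟨hj_lo, hj_hi⟩ := abs_le.mp hj
  have hj1_lo := (abs_le.mp hj1).1
  have hτe : 0 ≤ τ * (c2 + e) := mul_nonneg hτ (by linarith)
  rw [rRatio, lt_div_iff₀ (by linarith)]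
  nlinarith

end RidgeRatios

theorem isGreatest_tdrrSet {lam : ℕ → ℝ} {p q : ℕ} {L δ c1 c2 τ : ℝ} (hq : 1 ≤ q)
    (hpq : q + 2 ≤ p) (hL : 0 ≤ L) (hlam_q : L ≤ lam q)
    (hlam : ∀ i, q < i → i ≤ p → |lam i| ≤ δ) (hδ : δ ≤ 1 / 2) (hc1 : 0 < c1) (hc2 : 0 < c2)
    (hτ : 0 ≤ τ) (hgap : 8 * δ ^ 2 + c1 ≤ (L / (1 + L)) ^ 2)
    (hnum : 4 * δ ^ 2 / c1 + c2 ≤ τ) (hratio : (1 + τ) * (4 * δ ^ 2 / c1) < (1 - τ) * c2) :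
    IsGreatest (tdrrSet p lam c1 c2 τ) q := by
  have hsHat : ∀ i, q < i → i ≤ p → sHat lam i ^ 2 ≤ 4 * δ ^ 2 := fun i hi hip =>
    sHat_sq_le (hlam i hi hip) hδ
  have hsStar : ∀ j, q < j → j + 1 ≤ p → |sStar lam c1 j| ≤ 4 * δ ^ 2 / c1 := fun j hj hjp =>
    abs_sStar_le hc1 (hsHat j hj (by omega)) (hsHat (j + 1) (by omega) hjp)
  have hsHat_q : (L / (1 + L)) ^ 2 ≤ sHat lam q ^ 2 :=
    pow_le_pow_left₀ (by positivity) (div_one_add_le_sHat hL hlam_q) 2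
  refine ⟨⟨hq, by omega, rRatio_le hτ hc2.le (one_le_sStar hc1 ?_) ?_⟩, fun j hj => ?_⟩
  · linarith [hsHat (q + 1) (by omega) (by omega)]
  · linarith [le_of_abs_le (hsStar (q + 1) (by omega) (by omega))]
  · obtain ⟨-, hjp, hjτ⟩ := hj
    by_contra! hqj
    exact hjτ.not_gt (lt_rRatio hτ hc2 (hsStar j hqj (by omega))
      (hsStar (j + 1) (by omega) (by omega)) hratio)

/-- With `L = λ_q(M)` and `δ ≥ ‖Mₙ - M‖_F`: `4δ²/c₁` bounds `|ŝ*_j|` for `j > q`, and `L/2` bounds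
`λ̂_q` from below. -/
structure TDRRRegime (L δ c1 c2 τ : ℝ) : Prop where
  le_half : δ ≤ 1 / 2
  le_half_eigenvalue : δ ≤ L / 2
  gap : 8 * δ ^ 2 + c1 ≤ (L / 2 / (1 + L / 2)) ^ 2
  noise_add_le : 4 * δ ^ 2 / c1 + c2 ≤ τ
  noise_lt : (1 + τ) * (4 * δ ^ 2 / c1) < (1 - τ) * c2

theorem isGreatest_tdrrSet_of_frobNorm_le {p q : ℕ} {M A : Matrix (Fin p) (Fin p) ℝ}
    {δ c1 c2 τ : ℝ} (hM : M.IsHermitian) (hA : A.IsHermitian) (hq : 1 ≤ q) (hpq : q + 2 ≤ p)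
    (hzero : ∀ j, q < j → j ≤ p → eigDesc M j = 0) (hc1 : 0 < c1) (hc2 : 0 < c2) (hτ : 0 ≤ τ)
    (hreg : TDRRRegime (eigDesc M q) δ c1 c2 τ) (hclose : frobNorm (A - M) ≤ δ) :
    IsGreatest (tdrrSet p (eigDesc A) c1 c2 τ) q := by
  have hweyl : ∀ i, |eigDesc A i - eigDesc M i| ≤ δ := fun i =>
    (abs_eigDesc_sub_le_frobNorm hM hA i).trans hclose
  have hδ : 0 ≤ δ := (frobNorm_nonneg _).trans hclose
  refine isGreatest_tdrrSet hq hpq (by linarith [hreg.le_half_eigenvalue]) ?_ (fun i hi hip => ?_)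
    hreg.le_half hc1 hc2 hτ hreg.gap hreg.noise_add_le hreg.noise_lt
  · linarith [(abs_le.mp (hweyl q)).1, hreg.le_half_eigenvalue]
  · simpa [hzero i hi hip] using hweyl i

theorem eventually_tdrrRegime {ι : Type*} {l : Filter ι} {δ c1 c2 : ι → ℝ} {L τ : ℝ}
    (hL : 0 < L) (hτ0 : 0 < τ) (hτ1 : τ < 1) (hc2pos : ∀ i, 0 < c2 i)
    (hc1 : Tendsto c1 l (𝓝 0)) (hc2 : Tendsto c2 l (𝓝 0)) (hδ : Tendsto δ l (𝓝 0))
    (hρ : Tendsto (fun i => δ i ^ 2 / (c1 i * c2 i)) l (𝓝 0)) :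
    ∀ᶠ i in l, TDRRRegime L (δ i) (c1 i) (c2 i) τ := by
  have hnoise : ∀ i, 4 * δ i ^ 2 / c1 i = 4 * (δ i ^ 2 / (c1 i * c2 i)) * c2 i := fun i => by
    rw [mul_assoc 4, div_mul_eq_mul_div, mul_div_mul_right _ _ (hc2pos i).ne', mul_div_assoc]
  have hgap : Tendsto (fun i => 8 * δ i ^ 2 + c1 i) l (𝓝 0) := by
    simpa using ((hδ.pow 2).const_mul 8).add hc1
  have hnum : Tendsto (fun i => 4 * δ i ^ 2 / c1 i + c2 i) l (𝓝 0) := by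
    simp_rw [hnoise]
    simpa using ((hρ.const_mul 4).mul hc2).add hc2
  filter_upwards [hδ.eventually_le_const (by norm_num : (0 : ℝ) < 1 / 2),
    hδ.eventually_le_const (half_pos hL),
    hgap.eventually_le_const (show (0 : ℝ) < (L / 2 / (1 + L / 2)) ^ 2 by positivity),
    hnum.eventually_le_const hτ0,
    (hρ.const_mul ((1 + τ) * 4)).eventually_lt_const (by linarith : (1 + τ) * 4 * 0 < 1 - τ)]
    with i h_half h_L h_gap h_num h_ρ
  refine ⟨h_half, h_L, h_gap, h_num, ?_⟩
  rw [hnoise]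
  nlinarith [hc2pos i]

theorem tdrr_consistent_general (Ω : Type*) [MeasurableSpace Ω]
    (P : Measure Ω) [IsProbabilityMeasure P]
    (p q : ℕ) (hq : 1 ≤ q) (hpq : q + 2 ≤ p)
    (M : Matrix (Fin p) (Fin p) ℝ) (hM : M.PosSemidef)
    (heigpos : 0 < eigDesc M q) (heigzero : ∀ j, q < j → j ≤ p → eigDesc M j = 0)
    (Mn : ℕ → Ω → Matrix (Fin p) (Fin p) ℝ)
    (hherm : ∀ n ω, (Mn n ω).IsHermitian)
    (hOp : ∀ ε : ℝ≥0∞, 0 < ε → ∃ C : ℝ, 0 < C ∧ ∀ n : ℕ, 1 ≤ n →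
      P {ω | C / Real.sqrt n < frobNorm (Mn n ω - M)} ≤ ε)
    (c1 c2 : ℕ → ℝ) (hc1pos : ∀ n, 0 < c1 n) (hc2pos : ∀ n, 0 < c2 n)
    (hc1 : Tendsto c1 atTop (nhds 0)) (hc2 : Tendsto c2 atTop (nhds 0))
    (hncc : Tendsto (fun n : ℕ => (n : ℝ) * c1 n * c2 n) atTop atTop)
    (τ : ℝ) (hτ0 : 0 < τ) (hτ1 : τ < 1) :
    Tendsto (fun n => P {ω |
        {j | 1 ≤ j ∧ j ≤ p - 2 ∧
          rRatio (fun i => eigDesc (Mn n ω) i) (c1 n) (c2 n) j ≤ τ}.Nonempty ∧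
        sSup {j | 1 ≤ j ∧ j ≤ p - 2 ∧
          rRatio (fun i => eigDesc (Mn n ω) i) (c1 n) (c2 n) j ≤ τ} = q})
      atTop (nhds 1) := by
  refine tendsto_measure_nhds_one_of_compl_subset fun ε hε => ?_
  obtain ⟨C, -, hC⟩ := hOp ε hε
  have hδ : Tendsto (fun n : ℕ => C / √n) atTop (𝓝 0) :=
    tendsto_const_nhds.div_atTop (Real.tendsto_sqrt_atTop.comp tendsto_natCast_atTop_atTop)
  have hρ : Tendsto (fun n : ℕ => (C / √n) ^ 2 / (c1 n * c2 n)) atTop (𝓝 0) := by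
    simp_rw [div_pow, Real.sq_sqrt (Nat.cast_nonneg _), div_div, ← mul_assoc]
    exact tendsto_const_nhds.div_atTop hncc
  refine ⟨fun n => {ω | C / √n < frobNorm (Mn n ω - M)}, ?_⟩
  filter_upwards [eventually_tdrrRegime heigpos hτ0 hτ1 hc2pos hc1 hc2 hδ hρ,
    eventually_ge_atTop 1] with n hreg hn
  refine ⟨hC n hn, fun ω hω => ?_⟩
  have hS := isGreatest_tdrrSet_of_frobNorm_le hM.isHermitian (hherm n ω) hq hpq heigzero
    (hc1pos n) (hc2pos n) hτ0.le hreg (not_lt.mp hω)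
  exact ⟨⟨q, hS.1⟩, hS.csSup_eq⟩

/-- Consistency of the TDRR estimate: if random symmetric matrices `M n` converge to a
positive semidefinite matrix `M` with exactly `q` nonzero eigenvalues at rate
`O_p(n^{−1/2})` in Frobenius norm, ridges satisfy `c₁(n) → 0`, `c₂(n) → 0`,
`n·c₁(n)·c₂(n) → ∞`, and `τ ∈ (0,1)`, then with probability tending to one the set
`S_n = {j ∈ {1, ..., p − 2} : r_j(n) ≤ τ}` is nonempty with maximum `q`. -/
theorem tdrr_consistent (Ω : Type*) [MeasurableSpace Ω]
    (P : Measure Ω) [IsProbabilityMeasure P]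
    (p q : ℕ) (hq : 1 ≤ q) (hpq : q + 2 ≤ p)
    (M : Matrix (Fin p) (Fin p) ℝ) (hM : M.PosSemidef)
    (heigpos : 0 < eigDesc M q) (heigzero : ∀ j, q < j → j ≤ p → eigDesc M j = 0)
    (Mn : ℕ → Ω → Matrix (Fin p) (Fin p) ℝ)
    (hmeas : ∀ n i j, Measurable (fun ω => Mn n ω i j))
    (hherm : ∀ n ω, (Mn n ω).IsHermitian)
    (hOp : ∀ ε : ℝ≥0∞, 0 < ε → ∃ C : ℝ, 0 < C ∧ ∀ n : ℕ, 1 ≤ n →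
      P {ω | C / Real.sqrt n < frobNorm (Mn n ω - M)} ≤ ε)
    (c1 c2 : ℕ → ℝ) (hc1pos : ∀ n, 0 < c1 n) (hc2pos : ∀ n, 0 < c2 n)
    (hc1 : Tendsto c1 atTop (nhds 0)) (hc2 : Tendsto c2 atTop (nhds 0))
    (hncc : Tendsto (fun n : ℕ => (n : ℝ) * c1 n * c2 n) atTop atTop)
    (τ : ℝ) (hτ0 : 0 < τ) (hτ1 : τ < 1) :
    Tendsto (fun n => P {ω |
        {j | 1 ≤ j ∧ j ≤ p - 2 ∧
          rRatio (fun i => eigDesc (Mn n ω) i) (c1 n) (c2 n) j ≤ τ}.Nonempty ∧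
        sSup {j | 1 ≤ j ∧ j ≤ p - 2 ∧
          rRatio (fun i => eigDesc (Mn n ω) i) (c1 n) (c2 n) j ≤ τ} = q})
      atTop (nhds 1) :=
  tdrr_consistent_general Ω P p q hq hpq M hM heigpos heigzero Mn hherm hOp c1 c2 hc1pos hc2pos hc1
    hc2 hncc τ hτ0 hτ1
end

section
/- Let X be an integrable random vector in ℝ^p on a probability space (Ω, F, P), let Y be a real random variable, let B₁ be a real p×q₁ matrix, and let t ∈ ℝ. Assume: (a) E[X − E[X] | σ(B₁ᵀX)] = P_{B₁}(X − E[X]) almost surely, where P_{B₁} is the orthogonal projection of ℝ^p onto the column space of B₁; and (b) E[1_{{Y ≤ t}} | σ(X)] = E[1_{{Y ≤ t}} | σ(B₁ᵀX)] almost surely. Then the vector m(t) := E[(X − E[X])·1_{{Y ≤ t}}] belongs to the column space of B₁. -/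
/-!
Write `Z = 1_{Y ≤ t}`, `G = X − E[X]` and `W = E[Z | σ(B₁ᵀX)]`. Since `G` is `σ(X)`-measurable and
`W` is `σ(B₁ᵀX)`-measurable, pulling out known factors and condition (b) give
`E[Z G] = E[E[Z | σ(X)] G] = E[W G] = E[W E[G | σ(B₁ᵀX)]]`.
By the linearity condition the last integrand takes values in the column space of `B₁` almost
surely, and a closed subspace contains the integral of any function with values in it.
-/

open MeasureTheory

section
variable {Ω E : Type*} {m m₀ : MeasurableSpace Ω} {P : Measure[m₀] Ω}
  [NormedAddCommGroup E] [NormedSpace ℝ E] [CompleteSpace E]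

theorem Submodule.integral_mem_of_ae_mem {K : Submodule ℝ E} (hK : IsClosed (K : Set E))
    {f : Ω → E} (hf : ∀ᵐ ω ∂P, f ω ∈ K) : ∫ ω, f ω ∂P ∈ K := by
  have := hK -- makes `E ⧸ K` a normed space
  by_cases hfi : Integrable f P
  · rw [← Submodule.Quotient.mk_eq_zero, ← K.mkQ_apply, ← K.mkQL_apply,
      ← K.mkQL.integral_comp_comm hfi]
    exact integral_eq_zero_of_ae (hf.mono fun _ h => by simpa using h)
  · simp [integral_undef hfi]

variable {Z : Ω → ℝ} {G : Ω → E}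

theorem integral_condExp_smul (hm : m ≤ m₀) [SigmaFinite (P.trim hm)]
    (hZ : Integrable Z P) (hZG : Integrable (Z • G) P) (hG : AEStronglyMeasurable[m] G P) :
    ∫ ω, P[Z|m] ω • G ω ∂P = ∫ ω, Z ω • G ω ∂P :=
  (integral_congr_ae (condExp_smul_of_aestronglyMeasurable_right hZ hZG hG)).symm.trans
    (integral_condExp hm)

theorem integral_smul_condExp (hm : m ≤ m₀) [SigmaFinite (P.trim hm)]
    (hZ : AEStronglyMeasurable[m] Z P) (hZG : Integrable (Z • G) P) (hG : Integrable G P) :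
    ∫ ω, Z ω • P[G|m] ω ∂P = ∫ ω, Z ω • G ω ∂P :=
  (integral_congr_ae (condExp_smul_of_aestronglyMeasurable_left hZ hZG hG)).symm.trans
    (integral_condExp hm)

theorem integral_smul_mem_of_condExp_mem [IsFiniteMeasure P] {m₁ m₂ : MeasurableSpace Ω}
    (hm₁ : m₁ ≤ m₀) (hm₂ : m₂ ≤ m₀) {K : Submodule ℝ E} (hK : IsClosed (K : Set E)) {R : ℝ}
    (hZ : AEStronglyMeasurable[m₀] Z P) (hZR : ∀ᵐ ω ∂P, |Z ω| ≤ R)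
    (hG : AEStronglyMeasurable[m₂] G P) (hGint : Integrable G P)
    (hZcond : P[Z|m₂] =ᵐ[P] P[Z|m₁]) (hGK : ∀ᵐ ω ∂P, P[G|m₁] ω ∈ K) :
    ∫ ω, Z ω • G ω ∂P ∈ K := by
  have hZint : Integrable Z P :=
    (integrable_const R).mono' hZ (hZR.mono fun _ h => (Real.norm_eq_abs _).trans_le h)
  set W := P[Z|m₁]
  have hW : StronglyMeasurable[m₁] W := stronglyMeasurable_condExp
  have hWR : ∀ᵐ ω ∂P, ‖W ω‖ ≤ R := by
    simpa only [Real.norm_eq_abs] using ae_bdd_abs_condExp_of_ae_bdd_abs hZR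
  have hWG : Integrable (W • G) P :=
    hGint.bdd_smul R (hW.mono hm₁).aestronglyMeasurable hWR
  have hZG : Integrable (Z • G) P :=
    hGint.bdd_smul R hZ (hZR.mono fun _ h => (Real.norm_eq_abs _).trans_le h)
  have hWGK : ∫ ω, W ω • P[G|m₁] ω ∂P ∈ K :=
    K.integral_mem_of_ae_mem hK (hGK.mono fun _ h => K.smul_mem _ h)
  suffices ∫ ω, Z ω • G ω ∂P = ∫ ω, W ω • P[G|m₁] ω ∂P from this ▸ hWGK
  calc ∫ ω, Z ω • G ω ∂P
      = ∫ ω, P[Z|m₂] ω • G ω ∂P := (integral_condExp_smul hm₂ hZint hZG hG).symm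
    _ = ∫ ω, W ω • G ω ∂P := integral_congr_ae (hZcond.mono fun ω h => congrArg (· • G ω) h)
    _ = ∫ ω, W ω • P[G|m₁] ω ∂P :=
      (integral_smul_condExp hm₁ hW.aestronglyMeasurable hWG hGint).symm
end

/-- Under the linearity condition of sliced inverse regression and the condition that the
conditional distribution function of `Y` given `X` at `t` depends on `X` only through
`B₁ᵀX`, the vector `m(t) = E[(X − E[X])·1_{Y ≤ t}]` belongs to the column space of `B₁`.

Hypothesis `ha` is the linearity condition: the conditional expectation of `X − E[X]`
given `σ(B₁ᵀX)` equals the orthogonal projection of `X − E[X]` onto the column space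
`K` of `B₁`, almost surely.  Hypothesis `hb` says `E[1_{Y ≤ t} | σ(X)] = E[1_{Y ≤ t} |
σ(B₁ᵀX)]` almost surely. -/
theorem mean_slice_mem_colSpace (Ω : Type*) [MeasurableSpace Ω]
    (P : Measure Ω) [IsProbabilityMeasure P]
    (p q₁ : ℕ)
    (X : Ω → EuclideanSpace ℝ (Fin p)) (hXmeas : Measurable X) (hXint : Integrable X P)
    (Y : Ω → ℝ) (hYmeas : Measurable Y)
    (B₁ : Matrix (Fin p) (Fin q₁) ℝ) (t : ℝ)
    (K : Submodule ℝ (EuclideanSpace ℝ (Fin p)))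
    (hK : K = LinearMap.range (Matrix.toEuclideanLin B₁))
    (mB : MeasurableSpace Ω)
    (hmB : mB = MeasurableSpace.comap
      (fun ω => Matrix.toEuclideanLin B₁.transpose (X ω)) inferInstance)
    (ha : P[(fun ω => X ω - ∫ ω', X ω' ∂P) | mB] =ᵐ[P]
      fun ω => (Submodule.orthogonalProjectionOnto K (X ω - ∫ ω', X ω' ∂P) : EuclideanSpace ℝ (Fin p)))
    (hb : P[(fun ω => if Y ω ≤ t then (1 : ℝ) else 0) | MeasurableSpace.comap X inferInstance]
      =ᵐ[P] P[(fun ω => if Y ω ≤ t then (1 : ℝ) else 0) | mB]) :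
    (∫ ω, (if Y ω ≤ t then (1 : ℝ) else 0) • (X ω - ∫ ω', X ω' ∂P) ∂P) ∈ K := by
  subst hmB
  have hmB_le : MeasurableSpace.comap (fun ω => Matrix.toEuclideanLin B₁.transpose (X ω))
      inferInstance ≤ ‹MeasurableSpace Ω› :=
    ((Matrix.toEuclideanLin B₁.transpose).continuous_of_finiteDimensional.measurable.comp
      hXmeas).comap_le
  have hZ : Measurable fun ω => if Y ω ≤ t then (1 : ℝ) else 0 :=
    Measurable.ite (measurableSet_le hYmeas measurable_const) measurable_const measurable_const
  have hZ_le_one (ω : Ω) : |if Y ω ≤ t then (1 : ℝ) else 0| ≤ 1 := by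
    split_ifs <;> simp
  have hG : StronglyMeasurable[MeasurableSpace.comap X inferInstance]
      fun ω => X ω - ∫ ω', X ω' ∂P :=
    ((comap_measurable X).sub_const _).stronglyMeasurable
  exact integral_smul_mem_of_condExp_mem hmB_le hXmeas.comap_le K.closed_of_finiteDimensional
    hZ.aestronglyMeasurable (.of_forall hZ_le_one) hG.aestronglyMeasurable
    (hXint.sub (integrable_const _)) hb (ha.mono fun ω h => by rw [h]; exact Submodule.coe_mem _)
end

section
/- Let 1 ≤ q₁ < q and p ≥ q + 2. Let λ_{11} ≥ ... ≥ λ_{1q₁} > 0, let μ_1 ≥ ... ≥ μ_{q₁} ≥ 0 and μ_{q₁+1} ≥ ... ≥ μ_q > 0 be constants, and let C_n = n^{−α} with 0 < α < 1/2. For each n let λ̂_1(n), ..., λ̂_p(n) ≥ 0 satisfy, for a constant K and ρ_n := max{C_n², n^{−1/2}}: |λ̂_i(n) − λ_{1i} − C_n·μ_i| ≤ K·ρ_n for 1 ≤ i ≤ q₁; |λ̂_i(n) − C_n·μ_i| ≤ K·ρ_n for q₁ < i ≤ q; and |λ̂_i(n)| ≤ K·ρ_n for q < i ≤ p. Let c₁(n),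 c₂(n) > 0 with c₁(n)/C_n² → 0, c₂(n) → 0, n·c₁(n)·c₂(n) → ∞ and c₁(n)·c₂(n)/C_n⁴ → ∞, and fix τ ∈ (0, 1). Define ŝ_j(n) = λ̂_j(n)/(1 + λ̂_j(n)), ŝ*_j(n) = (ŝ_j(n)² + c₁(n))/(ŝ_{j+1}(n)² + c₁(n)) − 1, and r_j(n) = (ŝ*_{j+1}(n) + c₂(n))/(ŝ*_j(n) + c₂(n)). Then there exists N such that for all n ≥ N: r_q(n) ≤ τ and r_j(n) > τ for every j with q < j ≤ p − 2; consequently the set {j ∈ {1, ..., p − 2} : r_j(n) ≤ τ} is nonempty and its maximum equals q. -/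
open Filter

/-- Local drift rate `C_n = n^{−α}`. -/
noncomputable def Cseq (α : ℝ) (n : ℕ) : ℝ := (n : ℝ) ^ (-α)

/-- Remainder rate `ρ_n = max{C_n², n^{−1/2}}`. -/
noncomputable def rhoSeq (α : ℝ) (n : ℕ) : ℝ := max ((Cseq α n) ^ 2) (1 / Real.sqrt n)

set_option maxHeartbeats 4000000 in
/-- Under a sequence of local alternative models drifting at rate `C_n = n^{−α}`,
`0 < α < 1/2`, with eigenvalue structure `λ̂_i ≈ λ_{1i} + C_n·μ_i` (`i ≤ q₁`),
`λ̂_i ≈ C_n·μ_i` (`q₁ < i ≤ q`), `λ̂_i ≈ 0` (`i > q`) up to `O(ρ_n)`, and ridges with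
`c₁(n)/C_n² → 0`, `c₂(n) → 0`, `n·c₁(n)·c₂(n) → ∞`, `c₁(n)·c₂(n)/C_n⁴ → ∞`: eventually
`r_q(n) ≤ τ` and `r_j(n) > τ` for `q < j ≤ p − 2`; consequently the TDRR set is
nonempty with maximum `q`. -/
theorem tdrr_identifies_q_local_models (q₁ q p : ℕ)
    (hq₁ : 1 ≤ q₁) (hq₁q : q₁ < q) (hpq : q + 2 ≤ p)
    (lam1 : ℕ → ℝ)
    (hlam1dec : ∀ i j, 1 ≤ i → i ≤ j → j ≤ q₁ → lam1 j ≤ lam1 i)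
    (hlam1pos : 0 < lam1 q₁)
    (mu : ℕ → ℝ)
    (hmu1dec : ∀ i j, 1 ≤ i → i ≤ j → j ≤ q₁ → mu j ≤ mu i)
    (hmu1nn : 0 ≤ mu q₁)
    (hmu2dec : ∀ i j, q₁ + 1 ≤ i → i ≤ j → j ≤ q → mu j ≤ mu i)
    (hmu2pos : 0 < mu q)
    (α : ℝ) (hα0 : 0 < α) (hα1 : α < 1 / 2)
    (lamhat : ℕ → ℕ → ℝ)
    (hnn : ∀ n j, 1 ≤ j → j ≤ p → 0 ≤ lamhat n j)
    (K : ℝ)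
    (hrate1 : ∀ n, 1 ≤ n → ∀ i, 1 ≤ i → i ≤ q₁ →
      |lamhat n i - lam1 i - Cseq α n * mu i| ≤ K * rhoSeq α n)
    (hrate2 : ∀ n, 1 ≤ n → ∀ i, q₁ < i → i ≤ q →
      |lamhat n i - Cseq α n * mu i| ≤ K * rhoSeq α n)
    (hrate3 : ∀ n, 1 ≤ n → ∀ i, q < i → i ≤ p → |lamhat n i| ≤ K * rhoSeq α n)
    (c1 c2 : ℕ → ℝ) (hc1pos : ∀ n, 0 < c1 n) (hc2pos : ∀ n, 0 < c2 n)
    (hc1C : Tendsto (fun n => c1 n / (Cseq α n) ^ 2) atTop (nhds 0))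
    (hc2 : Tendsto c2 atTop (nhds 0))
    (hncc : Tendsto (fun n : ℕ => (n : ℝ) * c1 n * c2 n) atTop atTop)
    (hccC : Tendsto (fun n => c1 n * c2 n / (Cseq α n) ^ 4) atTop atTop)
    (τ : ℝ) (hτ0 : 0 < τ) (hτ1 : τ < 1) :
    ∃ N, ∀ n, N ≤ n →
      rRatio (lamhat n) (c1 n) (c2 n) q ≤ τ ∧
      (∀ j, q < j → j ≤ p - 2 → τ < rRatio (lamhat n) (c1 n) (c2 n) j) ∧
      {j | 1 ≤ j ∧ j ≤ p - 2 ∧ rRatio (lamhat n) (c1 n) (c2 n) j ≤ τ}.Nonempty ∧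
      sSup {j | 1 ≤ j ∧ j ≤ p - 2 ∧ rRatio (lamhat n) (c1 n) (c2 n) j ≤ τ} = q := by

  -- Basic positivity facts
  have hK : 0 ≤ K := by
    have h := hrate3 1 le_rfl (q + 1) (by omega) (by omega)
    have h1 : rhoSeq α 1 = 1 := by
      simp [rhoSeq, Cseq, Real.one_rpow, Real.sqrt_one]
    rw [h1, mul_one] at h
    exact le_trans (abs_nonneg _) h
  have hμ : 0 < mu q := hmu2pos
  have hm4 : (0:ℝ) < (mu q) ^ 2 / 64 := by positivity
  have hε0 : (0:ℝ) < (1 - τ) / 4 := by linarith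
  have hε1 : (1 - τ) / 4 ≤ 1 := by linarith
  have hC : ∀ n : ℕ, 1 ≤ n → 0 < Cseq α n := by
    intro n hn
    exact Real.rpow_pos_of_pos (by exact_mod_cast hn) _
  have hρ : ∀ n : ℕ, 1 ≤ n → 0 < rhoSeq α n := by
    intro n hn
    have : (0:ℝ) < 1 / Real.sqrt n := by
      have : (0:ℝ) < Real.sqrt n := Real.sqrt_pos.mpr (by exact_mod_cast hn)
      positivity
    exact lt_max_iff.mpr (Or.inr this)
  have hCast : Tendsto (fun n : ℕ => (n : ℝ)) atTop atTop := tendsto_natCast_atTop_atTop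
  have hC0 : Tendsto (fun n => Cseq α n) atTop (nhds 0) :=
    (tendsto_rpow_neg_atTop hα0).comp hCast
  -- 1/√n = n^(-1/2) for n ≥ 1 (indeed for all n ≥ 0)
  have hsqrt_eq : ∀ n : ℕ, (1 : ℝ) / Real.sqrt n = (n : ℝ) ^ (-(1/2) : ℝ) := by
    intro n
    rw [Real.sqrt_eq_rpow, Real.rpow_neg (by positivity), one_div]
  have hs0 : Tendsto (fun n : ℕ => 1 / Real.sqrt n) atTop (nhds 0) := by
    have h := (tendsto_rpow_neg_atTop (show (0:ℝ) < 1/2 by norm_num)).comp hCast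
    apply h.congr
    intro n
    exact (hsqrt_eq n).symm
  have hρ0 : Tendsto (fun n => rhoSeq α n) atTop (nhds 0) := by
    have h2 : Tendsto (fun n => Cseq α n ^ 2) atTop (nhds 0) := by
      simpa using hC0.pow 2
    have h3 := h2.max hs0
    rw [max_self] at h3
    exact h3
  -- ρ/C → 0
  have hratio : Tendsto (fun n => rhoSeq α n / Cseq α n) atTop (nhds 0) := by
    have hg2 : Tendsto (fun n : ℕ => (n : ℝ) ^ (α - 1/2)) atTop (nhds 0) := by
      have h := (tendsto_rpow_neg_atTop (show (0:ℝ) < 1/2 - α by linarith)).comp hCast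
      have hexp : -(1/2 - α) = α - 1/2 := by ring
      rw [hexp] at h
      exact h
    have hg : Tendsto (fun n : ℕ => Cseq α n + (n : ℝ) ^ (α - 1/2)) atTop (nhds 0) := by
      simpa using hC0.add hg2
    apply squeeze_zero' (f := fun n => rhoSeq α n / Cseq α n)
      (g := fun n : ℕ => Cseq α n + (n : ℝ) ^ (α - 1/2)) ?_ ?_ hg
    · filter_upwards [eventually_ge_atTop 1] with n hn
      exact div_nonneg (hρ n hn).le (hC n hn).le
    · filter_upwards [eventually_ge_atTop 1] with n hn
      have hCp := hC n hn
      have hn0 : (0:ℝ) < n := by exact_mod_cast hn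
      have hsn : (0:ℝ) ≤ 1 / Real.sqrt n := by positivity
      have hb : rhoSeq α n ≤ Cseq α n ^ 2 + 1 / Real.sqrt n := by
        apply max_le
        · linarith
        · linarith [sq_nonneg (Cseq α n)]
      have e2 : (1 / Real.sqrt n) / Cseq α n = (n : ℝ) ^ (α - 1/2) := by
        rw [hsqrt_eq n]
        show (n : ℝ) ^ (-(1/2):ℝ) / (n : ℝ) ^ (-α) = _
        rw [← Real.rpow_sub hn0]
        have hexp : (-(1/2) : ℝ) - -α = α - 1/2 := by ring
        rw [hexp]
      calc rhoSeq α n / Cseq α n ≤ (Cseq α n ^ 2 + 1 / Real.sqrt n) / Cseq α n :=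
            (div_le_div_iff_of_pos_right hCp).mpr hb
        _ = Cseq α n ^ 2 / Cseq α n + (1 / Real.sqrt n) / Cseq α n := add_div _ _ _
        _ = Cseq α n + (n : ℝ) ^ (α - 1/2) := by
            rw [e2, pow_two, mul_div_assoc, div_self hCp.ne', mul_one]
  -- ρ²/(c1 c2) → 0
  have hρ2c : Tendsto (fun n => rhoSeq α n ^ 2 / (c1 n * c2 n)) atTop (nhds 0) := by
    have hA : Tendsto (fun n => Cseq α n ^ 4 / (c1 n * c2 n)) atTop (nhds 0) := by
      exact hccC.inv_tendsto_atTop.congr fun n => by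
        simp only [Pi.inv_apply, inv_div]
    have hB : Tendsto (fun n : ℕ => ((n : ℝ) * c1 n * c2 n)⁻¹) atTop (nhds 0) := by
      exact hncc.inv_tendsto_atTop.congr fun n => by
        simp only [Pi.inv_apply]
    have hg : Tendsto
        (fun n : ℕ => Cseq α n ^ 4 / (c1 n * c2 n) + ((n : ℝ) * c1 n * c2 n)⁻¹)
        atTop (nhds 0) := by simpa using hA.add hB
    apply squeeze_zero' ?_ ?_ hg
    · filter_upwards [eventually_ge_atTop 1] with n hn
      have := mul_pos (hc1pos n) (hc2pos n)
      positivity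
    · filter_upwards [eventually_ge_atTop 1] with n hn
      have hn0 : (0:ℝ) < n := by exact_mod_cast hn
      have hcc : (0:ℝ) < c1 n * c2 n := mul_pos (hc1pos n) (hc2pos n)
      have hb : rhoSeq α n ^ 2 ≤ Cseq α n ^ 4 + 1 / (n:ℝ) := by
        have h1 : (1 / Real.sqrt n) ^ 2 = 1 / (n:ℝ) := by
          rw [div_pow, one_pow, Real.sq_sqrt hn0.le]
        have h2 : rhoSeq α n ^ 2 = max (Cseq α n ^ 2) (1 / Real.sqrt n) ^ 2 := rfl
        rw [h2]
        rcases max_cases (Cseq α n ^ 2) (1 / Real.sqrt n) with ⟨he, _⟩ | ⟨he, _⟩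
        · rw [he]; have : (0:ℝ) ≤ 1 / (n:ℝ) := by positivity
          nlinarith [sq_nonneg (Cseq α n)]
        · rw [he, h1]
          have : (0:ℝ) ≤ Cseq α n ^ 4 := by positivity
          linarith
      have e3 : (1 / (n:ℝ)) / (c1 n * c2 n) = ((n : ℝ) * c1 n * c2 n)⁻¹ := by
        rw [div_div, one_div, mul_assoc]
      calc rhoSeq α n ^ 2 / (c1 n * c2 n)
          ≤ (Cseq α n ^ 4 + 1 / (n:ℝ)) / (c1 n * c2 n) :=
            (div_le_div_iff_of_pos_right hcc).mpr hb
        _ = Cseq α n ^ 4 / (c1 n * c2 n) + (1 / (n:ℝ)) / (c1 n * c2 n) := add_div _ _ _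
        _ = _ := by rw [e3]
  -- The eventual hypotheses
  have evA : ∀ᶠ n : ℕ in atTop, 1 ≤ n := eventually_ge_atTop 1
  have evB : ∀ᶠ n : ℕ in atTop, K * rhoSeq α n ≤ mu q / 8 * Cseq α n := by
    have ht : Tendsto (fun n => K * (rhoSeq α n / Cseq α n)) atTop (nhds 0) := by
      simpa using hratio.const_mul K
    filter_upwards [ht.eventually_lt_const (show (0:ℝ) < mu q / 8 by positivity), evA]
      with n h hn
    have hCp := hC n hn
    rw [← mul_div_assoc] at h
    exact ((div_lt_iff₀ hCp).mp h).le
  have evC : ∀ᶠ n : ℕ in atTop, c1 n ≤ (mu q) ^ 2 / 64 * Cseq α n ^ 2 := by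
    filter_upwards [hc1C.eventually_lt_const hm4, evA] with n h hn
    have hCp : (0:ℝ) < Cseq α n ^ 2 := pow_pos (hC n hn) 2
    exact ((div_lt_iff₀ hCp).mp h).le
  have evD : ∀ᶠ n : ℕ in atTop, c2 n ≤ τ / 2 := by
    filter_upwards [hc2.eventually_lt_const (show (0:ℝ) < τ/2 by linarith)] with n h
    exact h.le
  have evE : ∀ᶠ n : ℕ in atTop, K ^ 2 * rhoSeq α n ^ 2 ≤ (1 - τ)/4 * (c1 n * c2 n) := by
    have hc : (0:ℝ) < K ^ 2 + 1 := by positivity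
    filter_upwards [hρ2c.eventually_lt_const
      (show (0:ℝ) < (1 - τ)/4 / (K ^ 2 + 1) by positivity)] with n h
    have hcc : (0:ℝ) < c1 n * c2 n := mul_pos (hc1pos n) (hc2pos n)
    have h2 : rhoSeq α n ^ 2 < (1 - τ)/4 / (K ^ 2 + 1) * (c1 n * c2 n) :=
      (div_lt_iff₀ hcc).mp h
    have h4 := mul_le_mul_of_nonneg_left h2.le hc.le
    have h5 : (K ^ 2 + 1) * ((1 - τ)/4 / (K ^ 2 + 1) * (c1 n * c2 n))
        = (1 - τ)/4 * (c1 n * c2 n) := by field_simp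
    rw [h5] at h4
    nlinarith [sq_nonneg (rhoSeq α n)]
  have evF : ∀ᶠ n : ℕ in atTop, Cseq α n * mu q + K * rhoSeq α n ≤ 1 := by
    have ht : Tendsto (fun n => Cseq α n * mu q + K * rhoSeq α n) atTop (nhds 0) := by
      simpa using (hC0.mul_const (mu q)).add (hρ0.const_mul K)
    filter_upwards [ht.eventually_lt_const one_pos] with n h
    exact h.le
  have hEv := ((((evA.and evB).and evC).and evD).and evE).and evF
  rw [eventually_atTop] at hEv
  obtain ⟨N, hN⟩ := hEv
  refine ⟨N, fun n hn => ?_⟩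
  obtain ⟨⟨⟨⟨⟨hn1, hKρ⟩, hc1m⟩, hc2τ⟩, hKρ2⟩, hsmall⟩ := hN n hn
  have hCp := hC n hn1
  have hρp := hρ n hn1
  have hc2p := hc2pos n
  have hc1p := hc1pos n
  have hKρnn : 0 ≤ K * rhoSeq α n := mul_nonneg hK hρp.le
  -- bounds on sHat for i > q
  have hsb : ∀ i, q < i → i ≤ p →
      0 ≤ sHat (lamhat n) i ∧ sHat (lamhat n) i ≤ K * rhoSeq α n := by
    intro i hi hip
    have hlnn : 0 ≤ lamhat n i := hnn n i (by omega) hip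
    have hlub : lamhat n i ≤ K * rhoSeq α n := by
      have := hrate3 n hn1 i hi hip
      exact le_trans (le_abs_self _) this
    constructor
    · exact div_nonneg hlnn (by linarith)
    · exact le_trans (div_le_self hlnn (by linarith)) hlub
  -- |sStar j| ≤ ε c2 for q < j, j+1 ≤ p
  have hsStarSmall : ∀ j, q < j → j + 1 ≤ p →
      |sStar (lamhat n) (c1 n) j| ≤ (1 - τ)/4 * c2 n := by
    intro j hj hjp
    obtain ⟨ha0, haK⟩ := hsb j hj (by omega)
    obtain ⟨hb0, hbK⟩ := hsb (j + 1) (by omega) hjp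
    set a := sHat (lamhat n) j with hadef
    set b := sHat (lamhat n) (j + 1) with hbdef
    have ha2 : a ^ 2 ≤ K ^ 2 * rhoSeq α n ^ 2 := by
      calc a ^ 2 ≤ (K * rhoSeq α n) ^ 2 := pow_le_pow_left₀ ha0 haK 2
        _ = K ^ 2 * rhoSeq α n ^ 2 := mul_pow _ _ _
    have hb2 : b ^ 2 ≤ K ^ 2 * rhoSeq α n ^ 2 := by
      calc b ^ 2 ≤ (K * rhoSeq α n) ^ 2 := pow_le_pow_left₀ hb0 hbK 2
        _ = K ^ 2 * rhoSeq α n ^ 2 := mul_pow _ _ _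
    have hden : (0:ℝ) < b ^ 2 + c1 n := by positivity
    have heq : sStar (lamhat n) (c1 n) j = (a ^ 2 - b ^ 2) / (b ^ 2 + c1 n) := by
      rw [sStar, ← hadef, ← hbdef, div_sub_one hden.ne']
      ring_nf
    rw [heq, abs_div, abs_of_pos hden, div_le_iff₀ hden]
    have habs : |a ^ 2 - b ^ 2| ≤ K ^ 2 * rhoSeq α n ^ 2 := by
      rw [abs_le]
      constructor <;> nlinarith [sq_nonneg a, sq_nonneg b]
    have hpos : (0:ℝ) ≤ (1 - τ)/4 * c2 n * b ^ 2 :=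
      mul_nonneg (mul_nonneg hε0.le hc2p.le) (sq_nonneg b)
    linarith [habs, hKρ2, hpos]
  -- sStar q is large
  have hsStarQ : 2 / τ * c2 n ≤ sStar (lamhat n) (c1 n) q := by
    have hrq := abs_le.mp (hrate2 n hn1 q hq₁q le_rfl)
    set lq := lamhat n q with hlq
    have hlq1 : Cseq α n * mu q - K * rhoSeq α n ≤ lq := by linarith [hrq.2]
    have hlq2 : lq ≤ Cseq α n * mu q + K * rhoSeq α n := by linarith [hrq.1]
    have hlqlb : mu q / 2 * Cseq α n ≤ lq := by nlinarith
    have hlqub : lq ≤ 1 := le_trans hlq2 hsmall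
    have hlqnn : 0 ≤ lq := le_trans (by nlinarith) hlqlb
    have h1l : (0:ℝ) < 1 + lq := by linarith
    have ha : lq / 2 ≤ sHat (lamhat n) q := by
      rw [sHat, ← hlq, div_le_div_iff₀ two_pos h1l]
      nlinarith
    have ha' : mu q / 4 * Cseq α n ≤ sHat (lamhat n) q := by
      refine le_trans ?_ ha
      nlinarith
    have ha2 : (mu q) ^ 2 / 16 * Cseq α n ^ 2 ≤ sHat (lamhat n) q ^ 2 := by
      have h0 : (0:ℝ) ≤ mu q / 4 * Cseq α n := by positivity
      nlinarith
    obtain ⟨hb0, hbK⟩ := hsb (q + 1) (by omega) (by omega)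
    have hb2 : sHat (lamhat n) (q + 1) ^ 2 ≤ K ^ 2 * rhoSeq α n ^ 2 := by nlinarith
    have hKρ2' : K ^ 2 * rhoSeq α n ^ 2 ≤ (mu q) ^ 2 / 64 * Cseq α n ^ 2 := by
      nlinarith
    set b := sHat (lamhat n) (q + 1) with hbdef
    have hden : (0:ℝ) < b ^ 2 + c1 n := by positivity
    have h2τ : 2 / τ * c2 n ≤ 1 := by
      rw [div_mul_eq_mul_div, div_le_one hτ0]
      linarith
    have h2τ0 : (0:ℝ) ≤ 2 / τ * c2 n := by positivity
    have key : (2 / τ * c2 n + 1) * (b ^ 2 + c1 n) ≤ sHat (lamhat n) q ^ 2 + c1 n := by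
      have e1 : 2 / τ * c2 n * b ^ 2 ≤ b ^ 2 := mul_le_of_le_one_left (sq_nonneg b) h2τ
      have e2 : 2 / τ * c2 n * c1 n ≤ c1 n := mul_le_of_le_one_left hc1p.le h2τ
      have e3 : b ^ 2 ≤ mu q ^ 2 / 64 * Cseq α n ^ 2 := le_trans hb2 hKρ2'
      linarith [ha2, hc1m, e1, e2, e3]
    have : 2 / τ * c2 n + 1 ≤ (sHat (lamhat n) q ^ 2 + c1 n) / (b ^ 2 + c1 n) :=
      (le_div_iff₀ hden).mpr key
    rw [sStar, ← hbdef]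
    linarith
  -- r_q ≤ τ
  have hrq : rRatio (lamhat n) (c1 n) (c2 n) q ≤ τ := by
    have h1 : |sStar (lamhat n) (c1 n) (q + 1)| ≤ (1 - τ)/4 * c2 n :=
      hsStarSmall (q + 1) (by omega) (by omega)
    have h1' := (abs_le.mp h1).2
    have hden : (0:ℝ) < sStar (lamhat n) (c1 n) q + c2 n := by
      have : (0:ℝ) < 2 / τ * c2 n := by positivity
      linarith [hsStarQ]
    rw [rRatio, div_le_iff₀ hden]
    have h3 : τ * (2 / τ * c2 n) = 2 * c2 n := by
      field_simp
    have h2 : τ * (2 / τ * c2 n + c2 n) ≤ τ * (sStar (lamhat n) (c1 n) q + c2 n) := by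
      apply mul_le_mul_of_nonneg_left _ hτ0.le
      linarith [hsStarQ]
    have hεc2 : (1 - τ)/4 * c2 n ≤ c2 n := mul_le_of_le_one_left hc2p.le hε1
    linarith [h1', h2, h3, hεc2, mul_nonneg hτ0.le hc2p.le]
  -- r_j > τ for q < j ≤ p - 2
  have hrj : ∀ j, q < j → j ≤ p - 2 → τ < rRatio (lamhat n) (c1 n) (c2 n) j := by
    intro j hj hjp
    have hj2p : j + 2 ≤ p := by omega
    have hA := abs_le.mp (hsStarSmall j hj (by omega))
    have hB := abs_le.mp (hsStarSmall (j + 1) (by omega) (by omega))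
    have hεc2 : (1 - τ)/4 * c2 n < c2 n := mul_lt_of_lt_one_left hc2p (by linarith)
    have hden : (0:ℝ) < sStar (lamhat n) (c1 n) j + c2 n := by linarith [hA.1]
    rw [rRatio, lt_div_iff₀ hden]
    have hup : sStar (lamhat n) (c1 n) j + c2 n ≤ (1 - τ)/4 * c2 n + c2 n := by
      linarith [hA.2]
    have h2 : τ * (sStar (lamhat n) (c1 n) j + c2 n)
        ≤ τ * ((1 - τ)/4 * c2 n + c2 n) := mul_le_mul_of_nonneg_left hup hτ0.le
    have hcoef : τ * ((1 - τ)/4) + τ + (1 - τ)/4 - 1 < 0 := by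
      have h := mul_pos (show (0:ℝ) < 1 - τ by linarith) (show (0:ℝ) < 3 - τ by linarith)
      nlinarith
    have hcc2 : (τ * ((1 - τ)/4) + τ + (1 - τ)/4 - 1) * c2 n < 0 :=
      mul_neg_of_neg_of_pos hcoef hc2p
    nlinarith [h2, hcc2, hB.1]
  refine ⟨hrq, hrj, ?_, ?_⟩
  · exact ⟨q, by omega, by omega, hrq⟩
  · have hqmem : q ∈ {j | 1 ≤ j ∧ j ≤ p - 2 ∧ rRatio (lamhat n) (c1 n) (c2 n) j ≤ τ} :=
      ⟨by omega, by omega, hrq⟩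
    have hub : ∀ j ∈ {j | 1 ≤ j ∧ j ≤ p - 2 ∧ rRatio (lamhat n) (c1 n) (c2 n) j ≤ τ},
        j ≤ q := by
      rintro j ⟨hj1, hj2, hj3⟩
      by_contra hcon
      push_neg at hcon
      exact absurd hj3 (not_le.mpr (hrj j hcon hj2))
    exact le_antisymm (csSup_le ⟨q, hqmem⟩ hub) (le_csSup ⟨q, hub⟩ hqmem)
end

section
/- Let 1 ≤ q₁ < q and p ≥ q + 2. Let λ_{11} ≥ ... ≥ λ_{1q₁} > 0 with s_j := λ_{1j}/(1 + λ_{1j}), let μ_1 ≥ ... ≥ μ_{q₁} ≥ 0 and μ_{q₁+1} ≥ ... ≥ μ_q > 0 be constants, and let C_n = n^{−α} with 0 < α < 1/2. For each n let λ̂_1(n), ..., λ̂_p(n) ≥ 0 satisfy, for a constant K and ρ_n := max{C_n², n^{−1/2}}: |λ̂_i(n) − λ_{1i} − C_n·μ_i| ≤ K·ρ_n for 1 ≤ i ≤ q₁; |λ̂_i(n) − C_n·μ_i| ≤ K·ρ_n for q₁ < i ≤ q; and |λ̂_i(n)| ≤ K·ρ_n for q < i ≤ p. Let c₁(n) > 0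 with c₁(n)/C_n² → 0, n·c₁(n) → ∞ and c₁(n)/C_n⁴ → ∞. Define ŝ_j(n) = λ̂_j(n)/(1 + λ̂_j(n)) and ŝ*_j(n) = (ŝ_j(n)² + c₁(n))/(ŝ_{j+1}(n)² + c₁(n)) − 1. Then as n → ∞: (i) for 1 ≤ j ≤ q₁ − 1, ŝ*_j(n) → s_j²/s_{j+1}² − 1; (ii) ŝ*_{q₁}(n) → +∞; (iii) for q₁ + 1 ≤ j ≤ q − 1, ŝ*_j(n) → μ_j²/μ_{j+1}² − 1; (iv) ŝ*_q(n) → +∞; (v) for q + 1 ≤ j ≤ p − 1, ŝ*_j(n) → 0. -/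
open Filter

open Topology

/-!
Write `ŝ*_j + 1 = (x + c₁)/(y + c₁)` with `x = ŝ_j²`, `y = ŝ_{j+1}²`. Dividing numerator and
denominator by a common scale `e_n` at which `x/e`, `y/e`, `c₁/e` have limits `A`, `B`, `γ` gives
the limit `(A + γ)/(B + γ)`, or `+∞` when `A > 0 = B = γ`. The right scales are: `e = 1` among the
strong directions (and at the gap `q₁`, where `ŝ_{q₁+1} → 0`), `e = C_n²` among the local directions
(and at the gap `q`, since `ρ_n = o(C_n)` for `α < 1/2`), and `e = c₁` in the noise, where
`ρ_n² ≤ C_n⁴ + 1/n = o(c₁)` by the two lower growth conditions on the ridge.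
-/

lemma tendsto_of_abs_sub_le_mul {ι : Type*} {l : Filter ι} {f g r : ι → ℝ} {K L : ℝ}
    (h : ∀ᶠ n in l, |f n - g n| ≤ K * r n) (hr : Tendsto r l (𝓝 0)) (hg : Tendsto g l (𝓝 L)) :
    Tendsto f l (𝓝 L) := by
  have hdiff : Tendsto (fun n => f n - g n) l (𝓝 0) :=
    squeeze_zero_norm' (by simpa only [Real.norm_eq_abs] using h) (by simpa using hr.const_mul K)
  simpa using hdiff.add hg

section RidgeRatio

variable {ι : Type*} {l : Filter ι} {x y c e : ι → ℝ}

lemma ridge_ratio_eq_div_scale {x y c e : ℝ} (he : e ≠ 0) :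
    (x + c) / (y + c) = (x / e + c / e) / (y / e + c / e) := by
  rw [← add_div, ← add_div, div_div_div_cancel_right₀ he]

lemma tendsto_ridge_ratio {A B γ : ℝ} (he : ∀ᶠ n in l, e n ≠ 0)
    (hx : Tendsto (fun n => x n / e n) l (𝓝 A)) (hy : Tendsto (fun n => y n / e n) l (𝓝 B))
    (hc : Tendsto (fun n => c n / e n) l (𝓝 γ)) (hBγ : B + γ ≠ 0) :
    Tendsto (fun n => (x n + c n) / (y n + c n)) l (𝓝 ((A + γ) / (B + γ))) := by
  refine ((hx.add hc).div (hy.add hc) hBγ).congr' ?_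
  filter_upwards [he] with n hn using (ridge_ratio_eq_div_scale hn).symm

lemma tendsto_ridge_ratio_atTop {A : ℝ} (hA : 0 < A) (he : ∀ᶠ n in l, 0 < e n)
    (hx : Tendsto (fun n => x n / e n) l (𝓝 A)) (hy : Tendsto (fun n => y n / e n) l (𝓝 0))
    (hc : Tendsto (fun n => c n / e n) l (𝓝 0)) (hyc : ∀ n, 0 < y n + c n) :
    Tendsto (fun n => (x n + c n) / (y n + c n)) l atTop := by
  have hden : Tendsto (fun n => y n / e n + c n / e n) l (𝓝[>] 0) := by
    refine tendsto_nhdsWithin_iff.2 ⟨by simpa using hy.add hc, ?_⟩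
    filter_upwards [he] with n hn
    rw [← add_div]
    exact div_pos (hyc n) hn
  have hnum : Tendsto (fun n => x n / e n + c n / e n) l (𝓝 A) := by simpa using hx.add hc
  refine (hnum.pos_mul_atTop hA hden.inv_tendsto_nhdsGT_zero).congr' ?_
  filter_upwards [he] with n hn
  simp only [Pi.inv_apply, ← div_eq_mul_inv]
  exact (ridge_ratio_eq_div_scale hn.ne').symm

end RidgeRatio

section SHat

variable {ι : Type*} {l : Filter ι} {lam : ι → ℕ → ℝ} {i : ℕ}

lemma tendsto_sHat {lam' : ℕ → ℝ} (h : Tendsto (fun n => lam n i) l (𝓝 (lam' i)))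
    (hlam' : 1 + lam' i ≠ 0) :
    Tendsto (fun n => sHat (lam n) i) l (𝓝 (sHat lam' i)) :=
  h.div (tendsto_const_nhds.add h) hlam'

lemma tendsto_sHat_sq_div {e : ι → ℝ} {m : ℝ} (h0 : Tendsto (fun n => lam n i) l (𝓝 0))
    (h : Tendsto (fun n => lam n i ^ 2 / e n) l (𝓝 m)) :
    Tendsto (fun n => sHat (lam n) i ^ 2 / e n) l (𝓝 m) := by
  have hden : Tendsto (fun n => (1 + lam n i) ^ 2) l (𝓝 1) := by
    simpa using ((tendsto_const_nhds (x := (1 : ℝ))).add h0).pow 2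
  have hquot := h.div hden one_ne_zero
  rw [div_one] at hquot
  refine hquot.congr fun n => ?_
  rw [Pi.div_apply, sHat, div_pow, div_right_comm]

lemma tendsto_sStar {c e : ι → ℝ} {j : ℕ} {A B γ : ℝ} (he : ∀ᶠ n in l, e n ≠ 0)
    (hx : Tendsto (fun n => sHat (lam n) j ^ 2 / e n) l (𝓝 A))
    (hy : Tendsto (fun n => sHat (lam n) (j + 1) ^ 2 / e n) l (𝓝 B))
    (hc : Tendsto (fun n => c n / e n) l (𝓝 γ)) (hBγ : B + γ ≠ 0) :
    Tendsto (fun n => sStar (lam n) (c n) j) l (𝓝 ((A + γ) / (B + γ) - 1)) :=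
  (tendsto_ridge_ratio he hx hy hc hBγ).sub_const 1

lemma tendsto_sStar_atTop_s13 {c e : ι → ℝ} {j : ℕ} {A : ℝ} (hA : 0 < A) (he : ∀ᶠ n in l, 0 < e n)
    (hx : Tendsto (fun n => sHat (lam n) j ^ 2 / e n) l (𝓝 A))
    (hy : Tendsto (fun n => sHat (lam n) (j + 1) ^ 2 / e n) l (𝓝 0))
    (hc : Tendsto (fun n => c n / e n) l (𝓝 0)) (hcpos : ∀ n, 0 < c n) :
    Tendsto (fun n => sStar (lam n) (c n) j) l atTop := by
  have h := tendsto_ridge_ratio_atTop hA he hx hy hc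
    fun n => add_pos_of_nonneg_of_pos (sq_nonneg _) (hcpos n)
  simpa only [sStar, sub_eq_add_neg] using tendsto_atTop_add_const_right l (-1) h

end SHat

section Rates

variable {α : ℝ}

lemma Cseq_pos {n : ℕ} (hn : 1 ≤ n) : 0 < Cseq α n :=
  Real.rpow_pos_of_pos (by exact_mod_cast hn) _

lemma tendsto_Cseq (hα : 0 < α) : Tendsto (Cseq α) atTop (𝓝 0) :=
  (tendsto_rpow_neg_atTop hα).comp tendsto_natCast_atTop_atTop

lemma tendsto_rhoSeq (hα : 0 < α) : Tendsto (rhoSeq α) atTop (𝓝 0) := by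
  have hsqrt : Tendsto (fun n : ℕ => 1 / Real.sqrt n) atTop (𝓝 0) :=
    (tendsto_inv_atTop_zero.comp
      (Real.tendsto_sqrt_atTop.comp tendsto_natCast_atTop_atTop)).congr fun n => (one_div _).symm
  have hmax := ((tendsto_Cseq hα).pow 2).max hsqrt
  rwa [zero_pow two_ne_zero, max_self] at hmax

lemma rhoSeq_div_Cseq {n : ℕ} (hn : 1 ≤ n) :
    rhoSeq α n / Cseq α n = max (Cseq α n) ((n : ℝ) ^ (-(1 / 2 - α))) := by
  have hn0 : (0 : ℝ) < n := by exact_mod_cast hn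
  have hC := Cseq_pos (α := α) hn
  have hsqrt : Real.sqrt n * Cseq α n = (n : ℝ) ^ (1 / 2 - α) := by
    rw [Real.sqrt_eq_rpow, Cseq, ← Real.rpow_add hn0, sub_eq_add_neg]
  rw [rhoSeq, ← max_div_div_right hC.le, sq, mul_div_cancel_right₀ _ hC.ne', div_div, hsqrt,
    Real.rpow_neg hn0.le, one_div]

lemma tendsto_rhoSeq_div_Cseq (hα0 : 0 < α) (hα1 : α < 1 / 2) :
    Tendsto (fun n => rhoSeq α n / Cseq α n) atTop (𝓝 0) := by
  have hpow : Tendsto (fun n : ℕ => (n : ℝ) ^ (-(1 / 2 - α))) atTop (𝓝 0) :=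
    (tendsto_rpow_neg_atTop (by linarith)).comp tendsto_natCast_atTop_atTop
  have hmax : Tendsto (fun n : ℕ => max (Cseq α n) ((n : ℝ) ^ (-(1 / 2 - α)))) atTop (𝓝 0) := by
    simpa using (tendsto_Cseq hα0).max hpow
  refine hmax.congr' ?_
  filter_upwards [eventually_ge_atTop 1] with n hn using (rhoSeq_div_Cseq hn).symm

lemma rhoSeq_sq_le (n : ℕ) : rhoSeq α n ^ 2 ≤ Cseq α n ^ 4 + 1 / n := by
  have h4 : (Cseq α n ^ 2) ^ 2 = Cseq α n ^ 4 := by ring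
  have hsqrt : (1 / Real.sqrt n) ^ 2 = 1 / n := by
    rw [div_pow, one_pow, Real.sq_sqrt n.cast_nonneg]
  rcases max_cases (Cseq α n ^ 2) (1 / Real.sqrt n) with ⟨h, -⟩ | ⟨h, -⟩
  · rw [rhoSeq, h, h4]
    have : 0 ≤ 1 / (n : ℝ) := by positivity
    linarith
  · rw [rhoSeq, h, hsqrt]
    have : 0 ≤ Cseq α n ^ 4 := by positivity
    linarith

end Rates

section RateBounds

variable {α K : ℝ} {c1 : ℕ → ℝ}

lemma tendsto_of_tendsto_div_Cseq_sq (hα : 0 < α)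
    (h : Tendsto (fun n => c1 n / Cseq α n ^ 2) atTop (𝓝 0)) : Tendsto c1 atTop (𝓝 0) := by
  have hprod : Tendsto (fun n => c1 n / Cseq α n ^ 2 * Cseq α n ^ 2) atTop (𝓝 0) := by
    simpa using h.mul ((tendsto_Cseq hα).pow 2)
  refine hprod.congr' ?_
  filter_upwards [eventually_ge_atTop 1] with n hn
  exact div_mul_cancel₀ _ (pow_ne_zero 2 (Cseq_pos hn).ne')

lemma tendsto_rhoSeq_sq_div (hc1pos : ∀ n, 0 < c1 n)
    (hnc1 : Tendsto (fun n : ℕ => (n : ℝ) * c1 n) atTop atTop)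
    (hc1C4 : Tendsto (fun n => c1 n / Cseq α n ^ 4) atTop atTop) :
    Tendsto (fun n => rhoSeq α n ^ 2 / c1 n) atTop (𝓝 0) := by
  have hbound : Tendsto (fun n => (c1 n / Cseq α n ^ 4)⁻¹ + ((n : ℝ) * c1 n)⁻¹) atTop (𝓝 0) := by
    simpa using hc1C4.inv_tendsto_atTop.add hnc1.inv_tendsto_atTop
  refine squeeze_zero (fun n => div_nonneg (sq_nonneg _) (hc1pos n).le) (fun n => ?_) hbound
  calc rhoSeq α n ^ 2 / c1 n ≤ (Cseq α n ^ 4 + 1 / n) / c1 n :=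
        div_le_div_of_nonneg_right (rhoSeq_sq_le n) (hc1pos n).le
    _ = (c1 n / Cseq α n ^ 4)⁻¹ + ((n : ℝ) * c1 n)⁻¹ := by rw [inv_div]; ring

variable {f : ℕ → ℝ}

lemma tendsto_of_rate {L m : ℝ} (hα : 0 < α)
    (h : ∀ n, 1 ≤ n → |f n - L - Cseq α n * m| ≤ K * rhoSeq α n) : Tendsto f atTop (𝓝 L) := by
  refine tendsto_of_abs_sub_le_mul (g := fun n => L + Cseq α n * m) (K := K) ?_ (tendsto_rhoSeq hα)
    (by simpa using tendsto_const_nhds.add ((tendsto_Cseq hα).mul_const m))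
  filter_upwards [eventually_ge_atTop 1] with n hn
  simpa only [sub_sub] using h n hn

lemma tendsto_div_Cseq_of_rate {m : ℝ} (hα0 : 0 < α) (hα1 : α < 1 / 2)
    (h : ∀ n, 1 ≤ n → |f n - Cseq α n * m| ≤ K * rhoSeq α n) :
    Tendsto (fun n => f n / Cseq α n) atTop (𝓝 m) := by
  refine tendsto_of_abs_sub_le_mul (g := fun _ => m) (K := K) ?_
    (tendsto_rhoSeq_div_Cseq hα0 hα1) tendsto_const_nhds
  filter_upwards [eventually_ge_atTop 1] with n hn
  have hC := Cseq_pos (α := α) hn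
  rw [div_sub' hC.ne', abs_div, abs_of_pos hC, ← mul_div_assoc]
  exact div_le_div_of_nonneg_right (h n hn) hC.le

lemma tendsto_sq_div_of_rate (hc1pos : ∀ n, 0 < c1 n)
    (hnc1 : Tendsto (fun n : ℕ => (n : ℝ) * c1 n) atTop atTop)
    (hc1C4 : Tendsto (fun n => c1 n / Cseq α n ^ 4) atTop atTop)
    (h : ∀ n, 1 ≤ n → |f n| ≤ K * rhoSeq α n) :
    Tendsto (fun n => f n ^ 2 / c1 n) atTop (𝓝 0) := by
  refine tendsto_of_abs_sub_le_mul (g := fun _ => 0) (K := K ^ 2) ?_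
    (tendsto_rhoSeq_sq_div hc1pos hnc1 hc1C4) tendsto_const_nhds
  filter_upwards [eventually_ge_atTop 1] with n hn
  have hsq : f n ^ 2 ≤ (K * rhoSeq α n) ^ 2 := by
    rw [← sq_abs]
    exact pow_le_pow_left₀ (abs_nonneg _) (h n hn) 2
  rw [sub_zero, abs_of_nonneg (div_nonneg (sq_nonneg _) (hc1pos n).le), ← mul_div_assoc,
    ← mul_pow]
  exact div_le_div_of_nonneg_right hsq (hc1pos n).le

end RateBounds

section RateSHat

variable {α K : ℝ} {lam : ℕ → ℕ → ℝ} {i : ℕ}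

lemma tendsto_sHat_sq_of_rate {lam' : ℕ → ℝ} {m : ℝ} (hα : 0 < α) (hlam' : 1 + lam' i ≠ 0)
    (h : ∀ n, 1 ≤ n → |lam n i - lam' i - Cseq α n * m| ≤ K * rhoSeq α n) :
    Tendsto (fun n => sHat (lam n) i ^ 2) atTop (𝓝 (sHat lam' i ^ 2)) :=
  (tendsto_sHat (tendsto_of_rate hα h) hlam').pow 2

lemma tendsto_sHat_sq_div_Cseq_sq_of_rate {m : ℝ} (hα0 : 0 < α) (hα1 : α < 1 / 2)
    (h : ∀ n, 1 ≤ n → |lam n i - Cseq α n * m| ≤ K * rhoSeq α n) :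
    Tendsto (fun n => sHat (lam n) i ^ 2 / Cseq α n ^ 2) atTop (𝓝 (m ^ 2)) := by
  refine tendsto_sHat_sq_div (tendsto_of_rate (L := 0) hα0 (by simpa using h)) ?_
  simpa only [div_pow] using (tendsto_div_Cseq_of_rate hα0 hα1 h).pow 2

lemma tendsto_sHat_sq_div_of_rate {c1 : ℕ → ℝ} (hα : 0 < α) (hc1pos : ∀ n, 0 < c1 n)
    (hnc1 : Tendsto (fun n : ℕ => (n : ℝ) * c1 n) atTop atTop)
    (hc1C4 : Tendsto (fun n => c1 n / Cseq α n ^ 4) atTop atTop)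
    (h : ∀ n, 1 ≤ n → |lam n i| ≤ K * rhoSeq α n) :
    Tendsto (fun n => sHat (lam n) i ^ 2 / c1 n) atTop (𝓝 0) :=
  tendsto_sHat_sq_div (tendsto_of_rate (L := 0) (m := 0) hα (by simpa using h))
    (tendsto_sq_div_of_rate hc1pos hnc1 hc1C4 h)

end RateSHat

theorem sStar_limits_local_models_general (q₁ q p : ℕ)
    (hq₁ : 1 ≤ q₁) (hq₁q : q₁ < q) (hpq : q + 2 ≤ p)
    (lam1 : ℕ → ℝ)
    (hlam1dec : ∀ i j, 1 ≤ i → i ≤ j → j ≤ q₁ → lam1 j ≤ lam1 i)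
    (hlam1pos : 0 < lam1 q₁)
    (mu : ℕ → ℝ)
    (hmu2dec : ∀ i j, q₁ + 1 ≤ i → i ≤ j → j ≤ q → mu j ≤ mu i)
    (hmu2pos : 0 < mu q)
    (α : ℝ) (hα0 : 0 < α) (hα1 : α < 1 / 2)
    (lamhat : ℕ → ℕ → ℝ)
    (K : ℝ)
    (hrate1 : ∀ n, 1 ≤ n → ∀ i, 1 ≤ i → i ≤ q₁ →
      |lamhat n i - lam1 i - Cseq α n * mu i| ≤ K * rhoSeq α n)
    (hrate2 : ∀ n, 1 ≤ n → ∀ i, q₁ < i → i ≤ q →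
      |lamhat n i - Cseq α n * mu i| ≤ K * rhoSeq α n)
    (hrate3 : ∀ n, 1 ≤ n → ∀ i, q < i → i ≤ p → |lamhat n i| ≤ K * rhoSeq α n)
    (c1 : ℕ → ℝ) (hc1pos : ∀ n, 0 < c1 n)
    (hc1C2 : Tendsto (fun n => c1 n / (Cseq α n) ^ 2) atTop (nhds 0))
    (hnc1 : Tendsto (fun n : ℕ => (n : ℝ) * c1 n) atTop atTop)
    (hc1C4 : Tendsto (fun n => c1 n / (Cseq α n) ^ 4) atTop atTop) :
    (∀ j, 1 ≤ j → j ≤ q₁ - 1 →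
      Tendsto (fun n => sStar (lamhat n) (c1 n) j) atTop
        (nhds ((sHat lam1 j) ^ 2 / (sHat lam1 (j + 1)) ^ 2 - 1))) ∧
    Tendsto (fun n => sStar (lamhat n) (c1 n) q₁) atTop atTop ∧
    (∀ j, q₁ + 1 ≤ j → j ≤ q - 1 →
      Tendsto (fun n => sStar (lamhat n) (c1 n) j) atTop
        (nhds ((mu j) ^ 2 / (mu (j + 1)) ^ 2 - 1))) ∧
    Tendsto (fun n => sStar (lamhat n) (c1 n) q) atTop atTop ∧
    (∀ j, q + 1 ≤ j → j ≤ p - 1 →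
      Tendsto (fun n => sStar (lamhat n) (c1 n) j) atTop (nhds 0)) := by
  have hlam1 : ∀ i, 1 ≤ i → i ≤ q₁ → 0 < lam1 i := fun i hi hiq =>
    hlam1pos.trans_le (hlam1dec i q₁ hi hiq le_rfl)
  have hsLam1 : ∀ i, 1 ≤ i → i ≤ q₁ → 0 < sHat lam1 i ^ 2 := fun i hi hiq =>
    pow_pos (div_pos (hlam1 i hi hiq) (by linarith [hlam1 i hi hiq])) 2
  have hmu : ∀ i, q₁ < i → i ≤ q → 0 < mu i ^ 2 := fun i hi hiq =>
    pow_pos (hmu2pos.trans_le (hmu2dec i q hi hiq le_rfl)) 2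
  have hs1 : ∀ i, 1 ≤ i → i ≤ q₁ →
      Tendsto (fun n => sHat (lamhat n) i ^ 2 / 1) atTop (𝓝 (sHat lam1 i ^ 2)) := fun i hi hiq => by
    simpa using tendsto_sHat_sq_of_rate hα0 (by linarith [hlam1 i hi hiq]) (hrate1 · · i hi hiq)
  have hsC : ∀ i, q₁ < i → i ≤ q →
      Tendsto (fun n => sHat (lamhat n) i ^ 2 / Cseq α n ^ 2) atTop (𝓝 (mu i ^ 2)) :=
    fun i hi hiq => tendsto_sHat_sq_div_Cseq_sq_of_rate hα0 hα1 (hrate2 · · i hi hiq)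
  have hc1 : Tendsto (fun n => c1 n / 1) atTop (𝓝 0) := by
    simpa using tendsto_of_tendsto_div_Cseq_sq hα0 hc1C2
  have hC2 : ∀ᶠ n in atTop, 0 < Cseq α n ^ 2 :=
    (eventually_ge_atTop 1).mono fun n hn => pow_pos (Cseq_pos hn) 2
  refine ⟨fun j hj hjq => ?_, ?_, fun j hj hjq => ?_, ?_, fun j hj hjp => ?_⟩
  · simpa using tendsto_sStar (.of_forall fun _ => one_ne_zero) (hs1 j hj (by omega))
      (hs1 (j + 1) (by omega) (by omega)) hc1
      (by simpa using (hsLam1 (j + 1) (by omega) (by omega)).ne')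
  · refine tendsto_sStar_atTop_s13 (hsLam1 q₁ hq₁ le_rfl) (.of_forall fun _ => one_pos)
      (hs1 q₁ hq₁ le_rfl) ?_ hc1 hc1pos
    simpa [sHat] using tendsto_sHat_sq_of_rate (lam' := fun _ => 0) hα0 (by norm_num)
      fun n hn => by simpa using hrate2 n hn (q₁ + 1) (by omega) (by omega)
  · simpa using tendsto_sStar (hC2.mono fun n h => h.ne') (hsC j (by omega) (by omega))
      (hsC (j + 1) (by omega) (by omega)) hc1C2
      (by simpa using (hmu (j + 1) (by omega) (by omega)).ne')
  · refine tendsto_sStar_atTop_s13 (hmu q hq₁q le_rfl) hC2 (hsC q hq₁q le_rfl) ?_ hc1C2 hc1pos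
    simpa using tendsto_sHat_sq_div_Cseq_sq_of_rate hα0 hα1 (m := 0)
      (by simpa using (hrate3 · · (q + 1) (by omega) (by omega)))
  · have hsT : ∀ i, q < i → i ≤ p → Tendsto (fun n => sHat (lamhat n) i ^ 2 / c1 n) atTop (𝓝 0) :=
      fun i hi hip => tendsto_sHat_sq_div_of_rate hα0 hc1pos hnc1 hc1C4 (hrate3 · · i hi hip)
    have hc : Tendsto (fun n => c1 n / c1 n) atTop (𝓝 1) :=
      tendsto_const_nhds.congr fun n => (div_self (hc1pos n).ne').symm
    simpa using tendsto_sStar (.of_forall fun n => (hc1pos n).ne') (hsT j (by omega) (by omega))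
      (hsT (j + 1) (by omega) (by omega)) hc (by norm_num)

/-- Limits of the first-round ridge ratios under local alternative models drifting at rate
`C_n = n^{−α}`, `0 < α < 1/2`, using a ridge `c₁` with `c₁(n)/C_n² → 0`, `n·c₁(n) → ∞`,
`c₁(n)/C_n⁴ → ∞`:
(i) for `1 ≤ j ≤ q₁ − 1`, `ŝ*_j(n) → s_j²/s_{j+1}² − 1` (with `s_j = λ_{1j}/(1+λ_{1j})`);
(ii) `ŝ*_{q₁}(n) → +∞`;
(iii) for `q₁ + 1 ≤ j ≤ q − 1`, `ŝ*_j(n) → μ_j²/μ_{j+1}² − 1`;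
(iv) `ŝ*_q(n) → +∞`;
(v) for `q + 1 ≤ j ≤ p − 1`, `ŝ*_j(n) → 0`. -/
theorem sStar_limits_local_models (q₁ q p : ℕ)
    (hq₁ : 1 ≤ q₁) (hq₁q : q₁ < q) (hpq : q + 2 ≤ p)
    (lam1 : ℕ → ℝ)
    (hlam1dec : ∀ i j, 1 ≤ i → i ≤ j → j ≤ q₁ → lam1 j ≤ lam1 i)
    (hlam1pos : 0 < lam1 q₁)
    (mu : ℕ → ℝ)
    (hmu1dec : ∀ i j, 1 ≤ i → i ≤ j → j ≤ q₁ → mu j ≤ mu i)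
    (hmu1nn : 0 ≤ mu q₁)
    (hmu2dec : ∀ i j, q₁ + 1 ≤ i → i ≤ j → j ≤ q → mu j ≤ mu i)
    (hmu2pos : 0 < mu q)
    (α : ℝ) (hα0 : 0 < α) (hα1 : α < 1 / 2)
    (lamhat : ℕ → ℕ → ℝ)
    (hnn : ∀ n j, 1 ≤ j → j ≤ p → 0 ≤ lamhat n j)
    (K : ℝ)
    (hrate1 : ∀ n, 1 ≤ n → ∀ i, 1 ≤ i → i ≤ q₁ →
      |lamhat n i - lam1 i - Cseq α n * mu i| ≤ K * rhoSeq α n)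
    (hrate2 : ∀ n, 1 ≤ n → ∀ i, q₁ < i → i ≤ q →
      |lamhat n i - Cseq α n * mu i| ≤ K * rhoSeq α n)
    (hrate3 : ∀ n, 1 ≤ n → ∀ i, q < i → i ≤ p → |lamhat n i| ≤ K * rhoSeq α n)
    (c1 : ℕ → ℝ) (hc1pos : ∀ n, 0 < c1 n)
    (hc1C2 : Tendsto (fun n => c1 n / (Cseq α n) ^ 2) atTop (nhds 0))
    (hnc1 : Tendsto (fun n : ℕ => (n : ℝ) * c1 n) atTop atTop)
    (hc1C4 : Tendsto (fun n => c1 n / (Cseq α n) ^ 4) atTop atTop) :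
    (∀ j, 1 ≤ j → j ≤ q₁ - 1 →
      Tendsto (fun n => sStar (lamhat n) (c1 n) j) atTop
        (nhds ((sHat lam1 j) ^ 2 / (sHat lam1 (j + 1)) ^ 2 - 1))) ∧
    Tendsto (fun n => sStar (lamhat n) (c1 n) q₁) atTop atTop ∧
    (∀ j, q₁ + 1 ≤ j → j ≤ q - 1 →
      Tendsto (fun n => sStar (lamhat n) (c1 n) j) atTop
        (nhds ((mu j) ^ 2 / (mu (j + 1)) ^ 2 - 1))) ∧
    Tendsto (fun n => sStar (lamhat n) (c1 n) q) atTop atTop ∧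
    (∀ j, q + 1 ≤ j → j ≤ p - 1 →
      Tendsto (fun n => sStar (lamhat n) (c1 n) j) atTop (nhds 0)) :=
  sStar_limits_local_models_general q₁ q p hq₁ hq₁q hpq lam1 hlam1dec hlam1pos mu hmu2dec hmu2pos α
    hα0 hα1 lamhat K hrate1 hrate2 hrate3 c1 hc1pos hc1C2 hnc1 hc1C4
end
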